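/- arXiv:1910.04943 — 3 statements merged into one kernel-verified Lean document; each statement's English description precedes it below -/
import Mathlib

section
/- Under the stated setup, the matrix Riccati initial value problem H'(τ) + H(τ) CᵀΣC H(τ) − (1/γ)( η(T−τ)ᵀC H(τ) + H(τ) Cᵀη(T−τ) ) − ((γ−1)/γ²) η(T−τ)ᵀ Σ^{−1} η(T−τ) = 0 for τ ∈ [0,T], with H(0) = 0, has a unique solution H : [0,T] → ℝ^{N×N}; this solution is symmetric and positive semidefinite for every τ ∈ [0,T], and positive definite for every τ ∈ (0,T]. -/
/-!
Write the equation as `H' = Q + DᵀH + HD - HAH` with `A = CᵀΣC ⪰ 0`, `Q = c ηᵀΣ⁻¹η ≻ 0`,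
`c = (γ - 1)/γ²`, and `D = γ⁻¹ Cᵀη` diagonal with nonpositive entries.

Composing the quadratic field with the radial retraction onto a ball makes it globally Lipschitz
and bounded, so Picard–Lindelöf gives a solution of the truncated problem on `[0, T]`. Its
transpose solves the same problem, so it is symmetric. It is positive definite for `t > 0`: near
`0` because `H'(0) = Q(0) ≻ 0`, and later because at a first time where definiteness fails some
`z ≠ 0` lies in the kernel of `H`, so `σ ↦ zᵀH(σ)z` attains its minimum `0` there while its
derivative is `zᵀQz > 0`. Since `tr(DH) ≤ 0` and `tr(HAH) ≥ 0`, the trace of `H` grows at most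
like `t · max tr Q`, and for positive semidefinite `H` the trace bounds every entry; so for a
large enough radius the truncation is never active. Uniqueness is the Lipschitz estimate on a
ball containing two given solutions.
-/

open Matrix Set

attribute [local instance] Matrix.normedAddCommGroup Matrix.normedSpace

open Filter Metric Topology
open scoped NNReal

section PosSemidef

variable {n : Type*} [Fintype n]

theorem Matrix.PosSemidef.trace_mul_nonneg {P X : Matrix n n ℝ} (hP : P.PosSemidef)
    (hX : X.PosSemidef) : 0 ≤ (P * X).trace := by
  obtain ⟨m, v, rfl⟩ := Matrix.posSemidef_iff_eq_sum_vecMulVec.mp hX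
  simp only [Matrix.mul_sum, trace_sum, mul_vecMulVec, trace_vecMulVec]
  exact Finset.sum_nonneg fun i _ => dotProduct_comm (star (v i)) _ ▸ hP.dotProduct_mulVec_nonneg _

theorem Matrix.PosSemidef.abs_apply_le_trace {X : Matrix n n ℝ} (hX : X.PosSemidef) (i j : n) :
    |X i j| ≤ X.trace := by
  classical
  obtain rfl | hij := eq_or_ne i j
  · rw [abs_of_nonneg hX.diag_nonneg]
    exact Finset.single_le_sum (f := X.diag) (fun k _ => hX.diag_nonneg) (Finset.mem_univ i)
  have hpair : X i i + X j j ≤ X.trace := by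
    change X.diag i + X.diag j ≤ ∑ k, X.diag k
    rw [← Finset.sum_pair hij]
    exact Finset.sum_le_sum_of_subset_of_nonneg (Finset.subset_univ _)
      fun k _ _ => hX.diag_nonneg
  have hji : X j i = X i j := by simpa using hX.1.apply i j
  have hq (c : ℝ) : 0 ≤ X i i + 2 * c * X i j + c ^ 2 * X j j := by
    have := hX.dotProduct_mulVec_nonneg (Pi.single i 1 + Pi.single j c)
    simp only [star_trivial, mulVec_add, mulVec_single, MulOpposite.op_one, one_smul,
      op_smul_eq_smul, dotProduct_add, add_dotProduct, single_dotProduct, col_apply, one_mul, hji,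
      dotProduct_smul, smul_eq_mul] at this
    linarith
  rw [abs_le]
  constructor <;> nlinarith [hq 1, hq (-1), hX.diag_nonneg (i := i), hX.diag_nonneg (i := j)]

theorem Matrix.PosSemidef.norm_le_trace {X : Matrix n n ℝ} (hX : X.PosSemidef) :
    ‖X‖ ≤ X.trace :=
  (Matrix.norm_le_iff hX.trace_nonneg).2 hX.abs_apply_le_trace

end PosSemidef

section MinQuadForm

variable {n : Type*} [Fintype n]

noncomputable def minQuadForm (M : Matrix n n ℝ) : ℝ :=
  sInf ((fun z => z ⬝ᵥ M *ᵥ z) '' sphere 0 1)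

theorem continuous_quadForm :
    Continuous fun p : Matrix n n ℝ × (n → ℝ) => p.2 ⬝ᵥ p.1 *ᵥ p.2 := by
  fun_prop

theorem continuous_minQuadForm : Continuous (minQuadForm (n := n)) :=
  (isCompact_sphere 0 1).continuous_sInf continuous_quadForm

theorem minQuadForm_le (M : Matrix n n ℝ) {z : n → ℝ} (hz : ‖z‖ = 1) :
    minQuadForm M ≤ z ⬝ᵥ M *ᵥ z :=
  csInf_le ((isCompact_sphere 0 1).image
    (continuous_quadForm.comp (Continuous.prodMk_right M))).bddBelow
    ⟨z, mem_sphere_zero_iff_norm.2 hz, rfl⟩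

theorem exists_minQuadForm_eq [Nonempty n] (M : Matrix n n ℝ) :
    ∃ z : n → ℝ, ‖z‖ = 1 ∧ z ⬝ᵥ M *ᵥ z = minQuadForm M := by
  obtain ⟨z, hz, hzM⟩ := ((isCompact_sphere (0 : n → ℝ) 1).image
    (continuous_quadForm.comp (Continuous.prodMk_right M))).sInf_mem
    ((NormedSpace.sphere_nonempty.2 zero_le_one).image _)
  exact ⟨z, mem_sphere_zero_iff_norm.1 hz, hzM⟩

theorem minQuadForm_smul (M : Matrix n n ℝ) {c : ℝ} (hc : 0 ≤ c) :
    minQuadForm (c • M) = c * minQuadForm M := by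
  rw [minQuadForm, minQuadForm, ← smul_eq_mul, ← Real.sInf_smul_of_nonneg hc, ← image_smul,
    image_image]
  simp [smul_mulVec, dotProduct_smul]

theorem minQuadForm_mul_sq_norm_le (M : Matrix n n ℝ) (x : n → ℝ) :
    minQuadForm M * ‖x‖ ^ 2 ≤ x ⬝ᵥ M *ᵥ x := by
  obtain rfl | hx := eq_or_ne x 0
  · simp
  have hx' : ‖x‖ ≠ 0 := norm_ne_zero_iff.2 hx
  have hu : ‖‖x‖⁻¹ • x‖ = 1 := by rw [norm_smul, norm_inv, norm_norm, inv_mul_cancel₀ hx']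
  calc minQuadForm M * ‖x‖ ^ 2 ≤ (‖x‖⁻¹ • x) ⬝ᵥ M *ᵥ (‖x‖⁻¹ • x) * ‖x‖ ^ 2 :=
        mul_le_mul_of_nonneg_right (minQuadForm_le M hu) (sq_nonneg _)
    _ = x ⬝ᵥ M *ᵥ x := by
        simp only [mulVec_smul, dotProduct_smul, smul_dotProduct, smul_eq_mul]
        field_simp

theorem Matrix.PosDef.minQuadForm_pos [Nonempty n] {M : Matrix n n ℝ} (hM : M.PosDef) :
    0 < minQuadForm M := by
  obtain ⟨z, hz, hzM⟩ := exists_minQuadForm_eq M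
  rw [← hzM]
  simpa using hM.dotProduct_mulVec_pos (x := z) (by rintro rfl; simp at hz)

theorem Matrix.IsHermitian.posDef_of_minQuadForm_pos {M : Matrix n n ℝ} (hM : M.IsHermitian)
    (h : 0 < minQuadForm M) : M.PosDef :=
  .of_dotProduct_mulVec_pos hM fun x hx => by
    simpa using (mul_pos h (by positivity : 0 < ‖x‖ ^ 2)).trans_le
      (minQuadForm_mul_sq_norm_le M x)

theorem Matrix.IsHermitian.posSemidef_of_minQuadForm_nonneg {M : Matrix n n ℝ}
    (hM : M.IsHermitian) (h : 0 ≤ minQuadForm M) : M.PosSemidef :=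
  .of_dotProduct_mulVec_nonneg hM fun x => by
    simpa using (mul_nonneg h (sq_nonneg ‖x‖)).trans (minQuadForm_mul_sq_norm_le M x)

end MinQuadForm

theorem HasDerivWithinAt.linearMap_comp {E F : Type*} [NormedAddCommGroup E] [NormedSpace ℝ E]
    [FiniteDimensional ℝ E] [NormedAddCommGroup F] [NormedSpace ℝ F] {f : ℝ → E} {f' : E}
    {s : Set ℝ} {t : ℝ} (L : E →ₗ[ℝ] F) (h : HasDerivWithinAt f f' s t) :
    HasDerivWithinAt (fun σ => L (f σ)) (L f') s t :=
  L.toContinuousLinearMap.hasFDerivAt.comp_hasDerivWithinAt t h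

theorem IsMinOn.hasDerivWithinAt_nonpos_of_right {f : ℝ → ℝ} {f' a b : ℝ} (hab : a < b)
    (hmin : IsMinOn f (Icc a b) b) (hf : HasDerivWithinAt f f' (Icc a b) b) : f' ≤ 0 := by
  have hcone : a - b ∈ posTangentConeAt (Icc a b) b :=
    sub_mem_posTangentConeAt_of_segment_subset (by rw [segment_symm, segment_eq_Icc hab.le])
  have := hmin.localize.hasFDerivWithinAt_nonneg hf.hasFDerivWithinAt hcone
  simp only [ContinuousLinearMap.toSpanSingleton_apply, smul_eq_mul] at this
  nlinarith

section FirstDegeneracy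

variable {n : Type*} [Fintype n]

theorem HasDerivWithinAt.dotProduct_mulVec_self {H : ℝ → Matrix n n ℝ} {H' : Matrix n n ℝ}
    {s : Set ℝ} {t : ℝ} (h : HasDerivWithinAt H H' s t) (z : n → ℝ) :
    HasDerivWithinAt (fun σ => z ⬝ᵥ H σ *ᵥ z) (z ⬝ᵥ H' *ᵥ z) s t :=
  h.linearMap_comp
    { toFun := fun M => z ⬝ᵥ M *ᵥ z
      map_add' := fun _ _ => by simp [add_mulVec, dotProduct_add]
      map_smul' := fun _ _ => by simp [smul_mulVec, dotProduct_smul] }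

theorem eventually_minQuadForm_pos_of_hasDerivWithinAt [Nonempty n] {H : ℝ → Matrix n n ℝ}
    {P : Matrix n n ℝ} (hH : HasDerivWithinAt H P (Ici 0) 0) (h0 : H 0 = 0) (hP : P.PosDef) :
    ∀ᶠ t in 𝓝[>] 0, 0 < minQuadForm (H t) := by
  have hslope : Tendsto (fun t => t⁻¹ • H t) (𝓝[>] 0) (𝓝 P) :=
    ((hasDerivWithinAt_iff_tendsto_slope' (lt_irrefl 0)).1 hH.Ioi_of_Ici).congr fun t => by
      simp [slope_def_module, h0]
  filter_upwards [(continuous_minQuadForm.tendsto P).comp hslope |>.eventually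
    (lt_mem_nhds hP.minQuadForm_pos), self_mem_nhdsWithin] with t ht htpos
  rw [Function.comp_apply, minQuadForm_smul _ (inv_nonneg.2 (le_of_lt htpos))] at ht
  exact pos_of_mul_pos_right ht (inv_nonneg.2 (le_of_lt htpos))

theorem minQuadForm_pos_of_forall_Ioo [Nonempty n] {H : ℝ → Matrix n n ℝ} {H' : Matrix n n ℝ}
    {s : ℝ} (hs : 0 < s) (hH' : HasDerivWithinAt H H' (Icc 0 s) s) (hsymm : (H s).IsHermitian)
    (hpos : ∀ σ ∈ Ioo 0 s, 0 < minQuadForm (H σ))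
    (hker : ∀ z ≠ 0, H s *ᵥ z = 0 → 0 < z ⬝ᵥ H' *ᵥ z) :
    0 < minQuadForm (H s) := by
  have hnonneg : 0 ≤ minQuadForm (H s) := by
    have hcont : ContinuousWithinAt (fun σ => minQuadForm (H σ)) (Ioo 0 s) s :=
      (continuous_minQuadForm.continuousAt.comp_continuousWithinAt
        hH'.continuousWithinAt).mono Ioo_subset_Icc_self
    have : (𝓝[Ioo 0 s] s).NeBot := by rw [nhdsWithin_Ioo_eq_nhdsLT hs]; infer_instance
    exact ge_of_tendsto hcont (eventually_nhdsWithin_of_forall fun σ hσ => (hpos σ hσ).le)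
  by_contra hle
  have hzero : minQuadForm (H s) = 0 := le_antisymm (not_lt.1 hle) hnonneg
  obtain ⟨z, hz, hzH⟩ := exists_minQuadForm_eq (H s)
  have hz0 : z ≠ 0 := by rintro rfl; simp at hz
  have hHz : H s *ᵥ z = 0 :=
    ((hsymm.posSemidef_of_minQuadForm_nonneg hnonneg).dotProduct_mulVec_zero_iff z).1
      (by simpa [hzero] using hzH)
  have hmin : IsMinOn (fun σ => z ⬝ᵥ H σ *ᵥ z) (Icc (s / 2) s) s :=
    isMinOn_iff.2 fun σ hσ => by
      rcases hσ.2.eq_or_lt with rfl | hσs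
      · exact le_rfl
      · rw [hzH, hzero]
        exact (hpos σ ⟨by linarith [hσ.1], hσs⟩).le.trans (minQuadForm_le _ hz)
  have hderiv := hmin.hasDerivWithinAt_nonpos_of_right (by linarith)
    ((hH'.mono (Icc_subset_Icc (by linarith) le_rfl)).dotProduct_mulVec_self z)
  exact (hker z hz0 hHz).not_ge hderiv

theorem posDef_of_hasDerivWithinAt_of_kernel {H H' : ℝ → Matrix n n ℝ} {T : ℝ}
    (hH : ∀ t ∈ Icc 0 T, HasDerivWithinAt H (H' t) (Icc 0 T) t)
    (hsymm : ∀ t ∈ Icc 0 T, (H t).IsHermitian) (h0 : H 0 = 0) (h'0 : (H' 0).PosDef)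
    (hker : ∀ t ∈ Ioc 0 T, ∀ z ≠ 0, H t *ᵥ z = 0 → 0 < z ⬝ᵥ H' t *ᵥ z) :
    ∀ t ∈ Ioc 0 T, (H t).PosDef := by
  rcases isEmpty_or_nonempty n with _ | _
  · exact fun t _ => .of_dotProduct_mulVec_pos (by ext i; exact isEmptyElim i)
      fun x hx => absurd (Subsingleton.elim x 0) hx
  intro t₀ ht₀
  have hT : 0 < T := ht₀.1.trans_le ht₀.2
  have hcont : ContinuousOn H (Icc 0 T) := fun t ht => (hH t ht).continuousWithinAt
  have hm : ContinuousOn (fun t => minQuadForm (H t)) (Icc 0 T) :=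
    continuous_minQuadForm.comp_continuousOn hcont
  obtain ⟨δ, hδ, hδpos⟩ : ∃ δ > 0, Ioo 0 δ ⊆ {t | 0 < minQuadForm (H t)} :=
    mem_nhdsGT_iff_exists_Ioo_subset.1 <| eventually_minQuadForm_pos_of_hasDerivWithinAt
      ((hH 0 (left_mem_Icc.2 hT.le)).mono_of_mem_nhdsWithin (Icc_mem_nhdsGE hT)) h0 h'0
  by_contra hbad
  set B := Icc δ T ∩ {t | minQuadForm (H t) ≤ 0}
  have hB : IsClosed B := (hm.mono (Icc_subset_Icc hδ.le le_rfl)).preimage_isClosed_of_isClosed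
    isClosed_Icc isClosed_Iic
  have hBbdd : BddBelow B := ⟨δ, fun t ht => ht.1.1⟩
  have ht₀B : t₀ ∈ B := by
    have hm₀ : minQuadForm (H t₀) ≤ 0 :=
      not_lt.1 fun h => hbad ((hsymm t₀ (Ioc_subset_Icc_self ht₀)).posDef_of_minQuadForm_pos h)
    exact ⟨⟨not_lt.1 fun h => hm₀.not_gt (hδpos ⟨ht₀.1, h⟩), ht₀.2⟩, hm₀⟩
  set s := sInf B
  have hsB : s ∈ B := hB.csInf_mem ⟨t₀, ht₀B⟩ hBbdd
  have hs : 0 < s := hδ.trans_le hsB.1.1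
  have hsT : Icc 0 s ⊆ Icc 0 T := Icc_subset_Icc le_rfl hsB.1.2
  have hpos : ∀ σ ∈ Ioo 0 s, 0 < minQuadForm (H σ) := fun σ hσ => by
    by_contra hσB
    rcases lt_or_ge σ δ with hσδ | hσδ
    · exact hσB (hδpos ⟨hσ.1, hσδ⟩)
    · exact (csInf_le hBbdd ⟨⟨hσδ, hσ.2.le.trans hsB.1.2⟩, not_lt.1 hσB⟩).not_gt hσ.2
  exact hsB.2.not_gt (minQuadForm_pos_of_forall_Ioo hs
    ((hH s (hsT (right_mem_Icc.2 hs.le))).mono hsT) (hsymm s (hsT (right_mem_Icc.2 hs.le)))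
    hpos (hker s ⟨hs, hsB.1.2⟩))

end FirstDegeneracy

section BallRetraction

variable {E : Type*} [NormedAddCommGroup E] [NormedSpace ℝ E]

noncomputable def ballRetraction (R : ℝ) (x : E) : E := (R / max R ‖x‖) • x

theorem ballRetraction_of_norm_le {R : ℝ} (hR : 0 < R) {x : E} (hx : ‖x‖ ≤ R) :
    ballRetraction R x = x := by
  rw [ballRetraction, max_eq_left hx, div_self hR.ne', one_smul]

theorem norm_ballRetraction_le {R : ℝ} (hR : 0 < R) (x : E) : ‖ballRetraction R x‖ ≤ R := by
  have hm : 0 < max R ‖x‖ := hR.trans_le (le_max_left _ _)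
  rw [ballRetraction, norm_smul, Real.norm_of_nonneg (by positivity), div_mul_eq_mul_div,
    div_le_iff₀ hm]
  exact mul_le_mul_of_nonneg_left (le_max_right _ _) hR.le

theorem lipschitzWith_ballRetraction {R : ℝ} (hR : 0 < R) :
    LipschitzWith 2 (ballRetraction (E := E) R) := by
  refine LipschitzWith.of_dist_le_mul fun x y => ?_
  set mx := max R ‖x‖
  set my := max R ‖y‖
  have hmx : 0 < mx := hR.trans_le (le_max_left _ _)
  have hmy : 0 < my := hR.trans_le (le_max_left _ _)
  have hRx : R / mx ≤ 1 := (div_le_one hmx).2 (le_max_left _ _)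
  have hy : ‖y‖ / my ≤ 1 := (div_le_one hmy).2 (le_max_right _ _)
  have hm : |my - mx| ≤ ‖x - y‖ :=
    calc |my - mx| ≤ |‖y‖ - ‖x‖| := by
          have := abs_max_sub_max_le_abs ‖y‖ ‖x‖ R
          rwa [max_comm ‖y‖, max_comm ‖x‖] at this
      _ ≤ ‖x - y‖ := by rw [norm_sub_rev]; exact abs_norm_sub_norm_le _ _
  have hsplit : ballRetraction R x - ballRetraction R y
      = (R / mx) • (x - y) + (R / mx * ((my - mx) / my)) • y := by
    have : R / mx * ((my - mx) / my) = R / mx - R / my := by field_simp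
    rw [this, ballRetraction, ballRetraction, sub_smul, smul_sub]
    abel
  rw [dist_eq_norm, dist_eq_norm, hsplit, NNReal.coe_ofNat, two_mul]
  refine (norm_add_le _ _).trans (add_le_add ?_ ?_)
  · rw [norm_smul, Real.norm_of_nonneg (by positivity)]
    exact mul_le_of_le_one_left (norm_nonneg _) hRx
  · calc ‖(R / mx * ((my - mx) / my)) • y‖ = R / mx * |my - mx| * (‖y‖ / my) := by
          rw [norm_smul, Real.norm_eq_abs, abs_mul, abs_div, abs_div, abs_of_pos hR,
            abs_of_pos hmx, abs_of_pos hmy]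
          ring
      _ ≤ 1 * ‖x - y‖ * 1 := by gcongr
      _ = ‖x - y‖ := by ring

theorem ballRetraction_transpose {n : Type*} [Fintype n] (R : ℝ) (X : Matrix n n ℝ) :
    (ballRetraction R X)ᵀ = ballRetraction R Xᵀ := by
  rw [ballRetraction, ballRetraction, transpose_smul, norm_transpose]

end BallRetraction

section RiccatiRhs

variable {n : Type*} [Fintype n]

def riccatiRhs (A Q D X : Matrix n n ℝ) : Matrix n n ℝ := Q + Dᵀ * X + X * D - X * A * X

@[simp]
theorem riccatiRhs_zero (A Q D : Matrix n n ℝ) : riccatiRhs A Q D 0 = Q := by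
  simp [riccatiRhs]

theorem riccatiRhs_transpose {A Q : Matrix n n ℝ} (hA : Aᵀ = A) (hQ : Qᵀ = Q)
    (D X : Matrix n n ℝ) : (riccatiRhs A Q D X)ᵀ = riccatiRhs A Q D Xᵀ := by
  simp only [riccatiRhs, transpose_sub, transpose_add, transpose_mul, transpose_transpose, hA, hQ,
    Matrix.mul_assoc]
  abel

theorem dotProduct_riccatiRhs_mulVec {X : Matrix n n ℝ} {z : n → ℝ} (hX : Xᵀ = X)
    (hz : X *ᵥ z = 0) (A Q D : Matrix n n ℝ) :
    z ⬝ᵥ riccatiRhs A Q D X *ᵥ z = z ⬝ᵥ Q *ᵥ z := by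
  have hzX : z ᵥ* X = 0 := by rw [← mulVec_transpose, hX, hz]
  simp [riccatiRhs, sub_mulVec, add_mulVec, ← mulVec_mulVec, hz, dotProduct_mulVec, hzX]

theorem trace_riccatiRhs_le {A D X : Matrix n n ℝ} (hA : A.PosSemidef) (hD : (-D).PosSemidef)
    (hX : X.PosSemidef) (Q : Matrix n n ℝ) : (riccatiRhs A Q D X).trace ≤ Q.trace := by
  have hXs : Xᵀ = X := hX.1
  have hDX : 0 ≤ (-D * X).trace := hD.trace_mul_nonneg hX
  have hXAX : 0 ≤ (X * A * X).trace := by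
    simpa [hXs] using (hA.conjTranspose_mul_mul_same X).trace_nonneg
  have hDt : (Dᵀ * X).trace = (D * X).trace := by
    rw [← trace_transpose, transpose_mul, transpose_transpose, hXs, trace_mul_comm]
  simp only [riccatiRhs, trace_sub, trace_add, hDt, trace_mul_comm X D, Matrix.neg_mul,
    trace_neg] at hDX ⊢
  linarith

theorem contDiff_riccatiRhs (A : Matrix n n ℝ) :
    ContDiff ℝ 1 fun p : Matrix n n ℝ × Matrix n n ℝ × Matrix n n ℝ =>
      riccatiRhs A p.1 p.2.1 p.2.2 := by
  refine contDiff_pi.2 fun i => contDiff_pi.2 fun j => ?_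
  simp only [riccatiRhs, Matrix.sub_apply, Matrix.add_apply, mul_apply, transpose_apply]
  fun_prop

end RiccatiRhs

section RiccatiIVP

variable {n : Type*} [Fintype n] {A : Matrix n n ℝ} {Q D : ℝ → Matrix n n ℝ} {T R : ℝ}

noncomputable def truncatedRiccatiRhs (A : Matrix n n ℝ) (Q D : ℝ → Matrix n n ℝ) (R t : ℝ)
    (X : Matrix n n ℝ) : Matrix n n ℝ :=
  riccatiRhs A (Q t) (D t) (ballRetraction R X)

theorem exists_lipschitzWith_truncatedRiccatiRhs (hQ : ContinuousOn Q (Icc 0 T))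
    (hD : ContinuousOn D (Icc 0 T)) (hR : 0 < R) :
    ∃ K L : ℝ≥0, ∀ t ∈ Icc 0 T, LipschitzWith K (truncatedRiccatiRhs A Q D R t) ∧
      ∀ X, ‖truncatedRiccatiRhs A Q D R t X‖ ≤ L := by
  obtain ⟨B, hB⟩ := isCompact_Icc.exists_bound_of_continuousOn (hQ.prodMk hD)
  set ρ := max B R
  have hρ : 0 ≤ ρ := hR.le.trans (le_max_right _ _)
  obtain ⟨K, hK⟩ := (contDiff_riccatiRhs A).locallyLipschitz.locallyLipschitzOn
    |>.exists_lipschitzOnWith_of_compact (isCompact_closedBall 0 ρ)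
  have hmem : ∀ t ∈ Icc 0 T, ∀ X : Matrix n n ℝ, (Q t, D t, ballRetraction R X) ∈
      closedBall (0 : Matrix n n ℝ × Matrix n n ℝ × Matrix n n ℝ) ρ := fun t ht X => by
    have hQD := hB t ht
    have hX := norm_ballRetraction_le hR X
    simp only [mem_closedBall_zero_iff, Prod.norm_def, max_le_iff] at hQD ⊢
    exact ⟨le_max_of_le_left hQD.1, le_max_of_le_left hQD.2, le_max_of_le_right hX⟩
  refine ⟨K * 2, K * ρ.toNNReal, fun t ht =>
    ⟨LipschitzWith.of_dist_le_mul fun X Y => ?_, fun X => ?_⟩⟩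
  · have h := hK.dist_le_mul _ (hmem t ht X) _ (hmem t ht Y)
    simp only [Prod.dist_eq, dist_self, max_eq_right dist_nonneg] at h
    unfold truncatedRiccatiRhs
    refine h.trans ?_
    have h2 := (lipschitzWith_ballRetraction hR).dist_le_mul X Y
    push_cast at h2 ⊢
    nlinarith [K.coe_nonneg]
  · have h := hK.dist_le_mul _ (hmem t ht X) _ (mem_closedBall_self hρ)
    have h' := mem_closedBall.1 (hmem t ht X)
    simp only [Prod.fst_zero, Prod.snd_zero, riccatiRhs_zero, dist_zero_right] at h h'
    unfold truncatedRiccatiRhs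
    rw [NNReal.coe_mul, Real.coe_toNNReal _ hρ]
    exact h.trans (by gcongr)

theorem exists_truncated_riccati_solution (hT : 0 ≤ T) (hQ : ContinuousOn Q (Icc 0 T))
    (hD : ContinuousOn D (Icc 0 T)) (hR : 0 < R) :
    ∃ H : ℝ → Matrix n n ℝ, H 0 = 0 ∧
      ∀ t ∈ Icc 0 T, HasDerivWithinAt H (truncatedRiccatiRhs A Q D R t (H t)) (Icc 0 T) t := by
  obtain ⟨K, L, hKL⟩ := exists_lipschitzWith_truncatedRiccatiRhs (A := A) hQ hD hR
  have hpl : IsPicardLindelof (truncatedRiccatiRhs A Q D R) (tmin := 0) (tmax := T)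
      ⟨0, left_mem_Icc.2 hT⟩ 0 (L * T.toNNReal) 0 L K :=
    { lipschitzOnWith := fun t ht => (hKL t ht).1.lipschitzOnWith
      continuousOn := fun X _ => (contDiff_riccatiRhs A).continuous.comp_continuousOn
        (hQ.prodMk (hD.prodMk continuousOn_const))
      norm_le := fun t ht X _ => (hKL t ht).2 X
      mul_max_le := by simp [hT] }
  exact hpl.exists_eq_forall_mem_Icc_hasDerivWithinAt₀

theorem eqOn_of_truncated_riccati_solution (hQ : ContinuousOn Q (Icc 0 T))
    (hD : ContinuousOn D (Icc 0 T)) (hR : 0 < R) {H K : ℝ → Matrix n n ℝ}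
    (hH : ∀ t ∈ Icc 0 T, HasDerivWithinAt H (truncatedRiccatiRhs A Q D R t (H t)) (Icc 0 T) t)
    (hK : ∀ t ∈ Icc 0 T, HasDerivWithinAt K (truncatedRiccatiRhs A Q D R t (K t)) (Icc 0 T) t)
    (h0 : H 0 = K 0) : EqOn H K (Icc 0 T) := by
  obtain ⟨L, _, hL⟩ := exists_lipschitzWith_truncatedRiccatiRhs (A := A) hQ hD hR
  have hIci : ∀ F : ℝ → Matrix n n ℝ, (∀ t ∈ Icc 0 T,
      HasDerivWithinAt F (truncatedRiccatiRhs A Q D R t (F t)) (Icc 0 T) t) → ∀ t ∈ Ico 0 T,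
      HasDerivWithinAt F (truncatedRiccatiRhs A Q D R t (F t)) (Ici t) t := fun F hF t ht =>
    (hF t (Ico_subset_Icc_self ht)).mono_of_mem_nhdsWithin (Icc_mem_nhdsGE_of_mem ht)
  exact ODE_solution_unique_of_mem_Icc_right (s := fun _ => univ)
    (fun t ht => (hL t (Ico_subset_Icc_self ht)).1.lipschitzOnWith)
    (fun t ht => (hH t ht).continuousWithinAt) (hIci H hH) (fun _ _ => mem_univ _)
    (fun t ht => (hK t ht).continuousWithinAt) (hIci K hK) (fun _ _ => mem_univ _) h0

theorem truncated_riccati_solution_transpose (hA : Aᵀ = A)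
    (hQs : ∀ t ∈ Icc 0 T, (Q t)ᵀ = Q t) (hQ : ContinuousOn Q (Icc 0 T))
    (hD : ContinuousOn D (Icc 0 T)) (hR : 0 < R) {H : ℝ → Matrix n n ℝ} (hH0 : H 0 = 0)
    (hH : ∀ t ∈ Icc 0 T, HasDerivWithinAt H (truncatedRiccatiRhs A Q D R t (H t)) (Icc 0 T) t) :
    ∀ t ∈ Icc 0 T, (H t)ᵀ = H t := by
  refine eqOn_of_truncated_riccati_solution hQ hD hR (fun t ht => ?_) hH
    (by rw [hH0, transpose_zero])
  have h : HasDerivWithinAt (fun σ => (H σ)ᵀ) (truncatedRiccatiRhs A Q D R t (H t))ᵀ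
      (Icc 0 T) t :=
    (hH t ht).linearMap_comp (transposeLinearEquiv n n ℝ ℝ).toLinearMap
  rwa [truncatedRiccatiRhs, riccatiRhs_transpose hA (hQs t ht), ballRetraction_transpose] at h

theorem truncated_riccati_solution_posDef (hT : 0 ≤ T) (hA : Aᵀ = A)
    (hQpos : ∀ t ∈ Icc 0 T, (Q t).PosDef) (hQ : ContinuousOn Q (Icc 0 T))
    (hD : ContinuousOn D (Icc 0 T)) (hR : 0 < R) {H : ℝ → Matrix n n ℝ} (hH0 : H 0 = 0)
    (hH : ∀ t ∈ Icc 0 T, HasDerivWithinAt H (truncatedRiccatiRhs A Q D R t (H t)) (Icc 0 T) t) :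
    ∀ t ∈ Ioc 0 T, (H t).PosDef := by
  have hQs : ∀ t ∈ Icc 0 T, (Q t)ᵀ = Q t := fun t ht => (hQpos t ht).1
  have hHs := truncated_riccati_solution_transpose hA hQs hQ hD hR hH0 hH
  refine posDef_of_hasDerivWithinAt_of_kernel hH hHs hH0 ?_ fun t ht z hz hHz => ?_
  · simpa [truncatedRiccatiRhs, hH0, ballRetraction] using hQpos 0 (left_mem_Icc.2 hT)
  · have ht' := Ioc_subset_Icc_self ht
    rw [truncatedRiccatiRhs, dotProduct_riccatiRhs_mulVec
      (by rw [ballRetraction_transpose, hHs t ht'])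
      (by rw [ballRetraction, smul_mulVec, hHz, smul_zero])]
    simpa using (hQpos t ht').dotProduct_mulVec_pos hz

theorem trace_truncated_riccati_solution_le (hA : A.PosSemidef)
    (hDneg : ∀ t ∈ Icc 0 T, (-D t).PosSemidef) {C : ℝ} (hQC : ∀ t ∈ Icc 0 T, (Q t).trace ≤ C)
    (hR : 0 < R) {H : ℝ → Matrix n n ℝ} (hH0 : H 0 = 0)
    (hH : ∀ t ∈ Icc 0 T, HasDerivWithinAt H (truncatedRiccatiRhs A Q D R t (H t)) (Icc 0 T) t)
    (hpsd : ∀ t ∈ Icc 0 T, (H t).PosSemidef) :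
    ∀ t ∈ Icc 0 T, (H t).trace ≤ C * t := by
  have htr : ∀ t ∈ Icc 0 T, HasDerivWithinAt (fun σ => (H σ).trace)
      (truncatedRiccatiRhs A Q D R t (H t)).trace (Icc 0 T) t :=
    fun t ht => (hH t ht).linearMap_comp (traceLinearMap n ℝ ℝ)
  refine image_le_of_deriv_right_le_deriv_boundary (fun t ht => (htr t ht).continuousWithinAt)
    (fun t ht => (htr t (Ico_subset_Icc_self ht)).mono_of_mem_nhdsWithin
      (Icc_mem_nhdsGE_of_mem ht))
    (by simp [hH0]) (continuousOn_const.mul continuousOn_id)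
    (fun t _ => (hasDerivWithinAt_id t _).const_mul C) fun t ht => ?_
  have ht' := Ico_subset_Icc_self ht
  rw [mul_one]
  exact (trace_riccatiRhs_le hA (hDneg t ht') ((hpsd t ht').smul (by positivity)) _).trans
    (hQC t ht')

theorem exists_riccati_solution (hT : 0 ≤ T) (hA : A.PosSemidef) (hQ : ContinuousOn Q (Icc 0 T))
    (hQpos : ∀ t ∈ Icc 0 T, (Q t).PosDef) (hD : ContinuousOn D (Icc 0 T))
    (hDneg : ∀ t ∈ Icc 0 T, (-D t).PosSemidef) :
    ∃ H : ℝ → Matrix n n ℝ, H 0 = 0 ∧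
      (∀ t ∈ Icc 0 T, HasDerivWithinAt H (riccatiRhs A (Q t) (D t) (H t)) (Icc 0 T) t) ∧
      (∀ t ∈ Icc 0 T, (H t).PosSemidef) ∧ ∀ t ∈ Ioc 0 T, (H t).PosDef := by
  obtain ⟨C, hC⟩ := isCompact_Icc.exists_bound_of_continuousOn
    ((continuous_id.matrix_trace).comp_continuousOn hQ)
  have hQC : ∀ t ∈ Icc 0 T, (Q t).trace ≤ C := fun t ht => (Real.le_norm_self _).trans (hC t ht)
  have hR : 0 < |C| * T + 1 := by positivity
  obtain ⟨H, hH0, hH⟩ := exists_truncated_riccati_solution (A := A) hT hQ hD hR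
  have hpd := truncated_riccati_solution_posDef hT hA.1 hQpos hQ hD hR hH0 hH
  have hpsd : ∀ t ∈ Icc 0 T, (H t).PosSemidef := fun t ht => by
    rcases ht.1.eq_or_lt with rfl | ht₀
    · rw [hH0]; exact .zero
    · exact (hpd t ⟨ht₀, ht.2⟩).posSemidef
  have htr := trace_truncated_riccati_solution_le hA hDneg hQC hR hH0 hH hpsd
  have hret : ∀ t ∈ Icc 0 T, ballRetraction (|C| * T + 1) (H t) = H t := fun t ht =>
    ballRetraction_of_norm_le hR <| (hpsd t ht).norm_le_trace.trans <| (htr t ht).trans <| by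
      nlinarith [le_abs_self C, abs_nonneg C, ht.1, ht.2]
  exact ⟨H, hH0, fun t ht => by simpa [truncatedRiccatiRhs, hret t ht] using hH t ht, hpsd, hpd⟩

theorem riccati_solution_unique (hQ : ContinuousOn Q (Icc 0 T)) (hD : ContinuousOn D (Icc 0 T))
    {H K : ℝ → Matrix n n ℝ} (h0 : H 0 = K 0)
    (hH : ∀ t ∈ Icc 0 T, HasDerivWithinAt H (riccatiRhs A (Q t) (D t) (H t)) (Icc 0 T) t)
    (hK : ∀ t ∈ Icc 0 T, HasDerivWithinAt K (riccatiRhs A (Q t) (D t) (K t)) (Icc 0 T) t) :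
    EqOn H K (Icc 0 T) := by
  have hHc : ContinuousOn H (Icc 0 T) := fun t ht => (hH t ht).continuousWithinAt
  have hKc : ContinuousOn K (Icc 0 T) := fun t ht => (hK t ht).continuousWithinAt
  obtain ⟨r, hr⟩ := isCompact_Icc.exists_bound_of_continuousOn (hHc.prodMk hKc)
  have hR : 0 < max r 1 := lt_max_of_lt_right one_pos
  have htrunc : ∀ F : ℝ → Matrix n n ℝ, (∀ t ∈ Icc 0 T, ‖F t‖ ≤ r) →
      (∀ t ∈ Icc 0 T, HasDerivWithinAt F (riccatiRhs A (Q t) (D t) (F t)) (Icc 0 T) t) →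
      ∀ t ∈ Icc 0 T, HasDerivWithinAt F (truncatedRiccatiRhs A Q D (max r 1) t (F t))
        (Icc 0 T) t := fun F hFr hF t ht => by
    rw [truncatedRiccatiRhs, ballRetraction_of_norm_le hR ((hFr t ht).trans (le_max_left _ _))]
    exact hF t ht
  exact eqOn_of_truncated_riccati_solution hQ hD hR
    (htrunc H (fun t ht => (norm_fst_le _).trans (hr t ht)) hH)
    (htrunc K (fun t ht => (norm_snd_le _).trans (hr t ht)) hK) h0

end RiccatiIVP

theorem continuousOn_fromRows_diagonal_div {n : Type*} [DecidableEq n] {T : ℝ} {Tv a b : n → ℝ}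
    (hTv : ∀ i, T < Tv i) :
    ContinuousOn (fun τ => fromRows (diagonal fun i => a i / (Tv i - (T - τ)))
      (diagonal fun i => b i / (Tv i - (T - τ)))) (Icc 0 T) := by
  have hne : ∀ i, ∀ τ ∈ Icc 0 T, Tv i - (T - τ) ≠ 0 := fun i τ hτ => by linarith [hTv i, hτ.1]
  refine continuousOn_pi.2 fun r => continuousOn_pi.2 fun j => ?_
  rcases r with i | i <;> simp only [fromRows_apply_inl, fromRows_apply_inr, diagonal_apply] <;>
    split_ifs <;> fun_prop (disch := exact hne i)

section FuturesAndSpot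

variable {n : Type*} [Fintype n] [DecidableEq n]

theorem injective_mulVec_fromRows_diagonal {u v : n → ℝ} (huv : ∀ i, u i ≠ 0 ∨ v i ≠ 0) :
    Function.Injective (fromRows (diagonal u) (diagonal v)).mulVec := by
  intro x y hxy
  funext i
  have hu := congrFun hxy (Sum.inl i)
  have hv := congrFun hxy (Sum.inr i)
  simp only [fromRows_mulVec, Sum.elim_inl, Sum.elim_inr, mulVec_diagonal] at hu hv
  rcases huv i with h | h
  · exact mul_left_cancel₀ h hu
  · exact mul_left_cancel₀ h hv

theorem Matrix.PosDef.transpose_mul_mul_fromRows_diagonal {S : Matrix (n ⊕ n) (n ⊕ n) ℝ}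
    (hS : S.PosDef) {u v : n → ℝ} (huv : ∀ i, u i ≠ v i) :
    ((fromRows (diagonal u) (diagonal v))ᵀ * S * fromRows (diagonal u) (diagonal v)).PosDef := by
  have hinj := injective_mulVec_fromRows_diagonal fun i =>
    not_and_or.1 fun h : u i = 0 ∧ v i = 0 => huv i (h.1.trans h.2.symm)
  simpa using hS.conjTranspose_mul_mul_same hinj

theorem posSemidef_neg_smul_transpose_fromRows_mul_fromRows_diagonal {c : ℝ} (hc : 0 ≤ c)
    {u v : n → ℝ} (huv : u ≤ v) :
    (-(c • ((fromRows (1 : Matrix n n ℝ) (-1 : Matrix n n ℝ))ᵀ *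
      fromRows (diagonal u) (diagonal v)))).PosSemidef := by
  rw [transpose_fromRows, fromCols_mul_fromRows, transpose_one, transpose_neg, transpose_one,
    Matrix.one_mul, Matrix.neg_mul, Matrix.one_mul, ← sub_eq_add_neg, diagonal_sub, ← smul_neg,
    diagonal_neg]
  exact PosSemidef.smul (PosSemidef.diagonal fun i => neg_nonneg.2 (sub_nonpos.2 (huv i))) hc

end FuturesAndSpot

theorem riccati_equation_iff {n m : Type*} [Fintype n] [Fintype m] (A P X X' : Matrix n n ℝ)
    (C E : Matrix m n ℝ) (a c : ℝ) :
    X' + X * A * X - a • (Eᵀ * C * X + X * (Cᵀ * E)) - c • P = 0 ↔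
      X' = riccatiRhs A (c • P) (a • (Cᵀ * E)) X := by
  rw [← sub_eq_zero (a := X')]
  convert Iff.rfl using 2
  simp only [riccatiRhs, transpose_smul, transpose_mul, transpose_transpose, Matrix.smul_mul,
    Matrix.mul_smul, smul_add, Matrix.mul_assoc]
  abel

theorem riccati_futures_and_spot_general
    (N : ℕ)
    (Sig : Matrix (Fin N ⊕ Fin N) (Fin N ⊕ Fin N) ℝ)
    (hSig : Sig.PosDef)
    (T : ℝ) (Tv : Fin N → ℝ) (hT : 0 < T) (hTv : ∀ i, T < Tv i)
    (etaFv etaSv : Fin N → ℝ) (hetav : ∀ i, etaFv i < etaSv i)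
    (γ : ℝ) (hγ : 1 < γ)
    (C : Matrix (Fin N ⊕ Fin N) (Fin N) ℝ) (hC : C = Matrix.fromRows 1 (-1))
    (etaF etaS : ℝ → Matrix (Fin N) (Fin N) ℝ)
    (hetaF : ∀ t, etaF t = Matrix.diagonal fun i => etaFv i / (Tv i - t))
    (hetaS : ∀ t, etaS t = Matrix.diagonal fun i => etaSv i / (Tv i - t))
    (eta : ℝ → Matrix (Fin N ⊕ Fin N) (Fin N) ℝ)
    (heta : ∀ t, eta t = Matrix.fromRows (etaF t) (etaS t)) :
    ∃ H : ℝ → Matrix (Fin N) (Fin N) ℝ,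
      -- `H` solves the Riccati initial value problem on `[0, T]`
      (H 0 = 0 ∧
        ∃ H' : ℝ → Matrix (Fin N) (Fin N) ℝ,
          ContinuousOn H' (Icc 0 T) ∧
          ∀ τ ∈ Icc 0 T,
            HasDerivWithinAt H (H' τ) (Icc 0 T) τ ∧
            H' τ + H τ * (Cᵀ * Sig * C) * H τ
              - (1/γ) • ((eta (T - τ))ᵀ * C * H τ + H τ * (Cᵀ * eta (T - τ)))
              - ((γ - 1)/γ^2) • ((eta (T - τ))ᵀ * Sig⁻¹ * eta (T - τ)) = 0) ∧
      -- the solution is unique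
      (∀ K : ℝ → Matrix (Fin N) (Fin N) ℝ,
        (K 0 = 0 ∧
          ∃ K' : ℝ → Matrix (Fin N) (Fin N) ℝ,
            ContinuousOn K' (Icc 0 T) ∧
            ∀ τ ∈ Icc 0 T,
              HasDerivWithinAt K (K' τ) (Icc 0 T) τ ∧
              K' τ + K τ * (Cᵀ * Sig * C) * K τ
                - (1/γ) • ((eta (T - τ))ᵀ * C * K τ + K τ * (Cᵀ * eta (T - τ)))
                - ((γ - 1)/γ^2) • ((eta (T - τ))ᵀ * Sig⁻¹ * eta (T - τ)) = 0) →
        EqOn K H (Icc 0 T)) ∧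
      -- it is symmetric and positive semidefinite on `[0, T]`
      (∀ τ ∈ Icc 0 T, (H τ).IsSymm ∧ (H τ).PosSemidef) ∧
      -- and positive definite on `(0, T]`
      (∀ τ ∈ Ioc 0 T, (H τ).PosDef) := by
  have hη (t : ℝ) : eta t = fromRows (diagonal fun i => etaFv i / (Tv i - t))
      (diagonal fun i => etaSv i / (Tv i - t)) := by rw [heta, hetaF, hetaS]
  have hden : ∀ τ ∈ Icc 0 T, ∀ i, 0 < Tv i - (T - τ) := fun τ hτ i => by linarith [hTv i, hτ.1]
  have hηc : ContinuousOn (fun τ => eta (T - τ)) (Icc 0 T) := by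
    simpa only [hη] using continuousOn_fromRows_diagonal_div hTv
  have hQ := (by fun_prop : Continuous fun M : Matrix (Fin N ⊕ Fin N) (Fin N) ℝ =>
    ((γ - 1) / γ ^ 2) • (Mᵀ * Sig⁻¹ * M)).comp_continuousOn hηc
  have hD := (by fun_prop : Continuous fun M : Matrix (Fin N ⊕ Fin N) (Fin N) ℝ =>
    (1 / γ) • (Cᵀ * M)).comp_continuousOn hηc
  obtain ⟨H, hH0, hH, hpsd, hpd⟩ := exists_riccati_solution hT.le
    (by simpa using hSig.posSemidef.conjTranspose_mul_mul_same C) hQ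
    (fun τ hτ => by
      rw [Function.comp_apply, hη]
      exact (hSig.inv.transpose_mul_mul_fromRows_diagonal fun i =>
        ((div_lt_div_iff_of_pos_right (hden τ hτ i)).2 (hetav i)).ne).smul
        (div_pos (by linarith) (by positivity)))
    hD (fun τ hτ => by
      rw [Function.comp_apply, hC, hη]
      exact posSemidef_neg_smul_transpose_fromRows_mul_fromRows_diagonal (by positivity)
        fun i => div_le_div_of_nonneg_right (hetav i).le (hden τ hτ i).le)
  refine ⟨H, ⟨hH0, _, (contDiff_riccatiRhs _).continuous.comp_continuousOn
      (hQ.prodMk (hD.prodMk fun t ht => (hH t ht).continuousWithinAt)),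
      fun τ hτ => ⟨hH τ hτ, (riccati_equation_iff ..).2 rfl⟩⟩,
    fun K ⟨hK0, K', _, hK⟩ => riccati_solution_unique hQ hD (hK0.trans hH0.symm)
      (fun τ hτ => (riccati_equation_iff ..).1 (hK τ hτ).2 ▸ (hK τ hτ).1) hH,
    fun τ hτ => ⟨(hpsd τ hτ).1, hpsd τ hτ⟩, hpd⟩

/-- Theorem 5.1(i): existence, uniqueness, symmetry and positive (semi)definiteness of the
solution of the matrix Riccati equation arising when both futures and underlying assets
are traded. -/
theorem riccati_futures_and_spot
    (N : ℕ) (hN : 0 < N)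
    (SF SFS SS : Matrix (Fin N) (Fin N) ℝ)
    (Sig : Matrix (Fin N ⊕ Fin N) (Fin N ⊕ Fin N) ℝ)
    (hSigdef : Sig = Matrix.fromBlocks SF SFS SFSᵀ SS)
    (hSig : Sig.PosDef)
    (T : ℝ) (Tv : Fin N → ℝ) (hT : 0 < T) (hTv : ∀ i, T < Tv i)
    (etaFv etaSv : Fin N → ℝ) (hetav : ∀ i, etaFv i < etaSv i)
    (γ : ℝ) (hγ : 1 < γ)
    (C : Matrix (Fin N ⊕ Fin N) (Fin N) ℝ) (hC : C = Matrix.fromRows 1 (-1))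
    (etaF etaS : ℝ → Matrix (Fin N) (Fin N) ℝ)
    (hetaF : ∀ t, etaF t = Matrix.diagonal fun i => etaFv i / (Tv i - t))
    (hetaS : ∀ t, etaS t = Matrix.diagonal fun i => etaSv i / (Tv i - t))
    (eta : ℝ → Matrix (Fin N ⊕ Fin N) (Fin N) ℝ)
    (heta : ∀ t, eta t = Matrix.fromRows (etaF t) (etaS t)) :
    ∃ H : ℝ → Matrix (Fin N) (Fin N) ℝ,
      -- `H` solves the Riccati initial value problem on `[0, T]`
      (H 0 = 0 ∧
        ∃ H' : ℝ → Matrix (Fin N) (Fin N) ℝ,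
          ContinuousOn H' (Icc 0 T) ∧
          ∀ τ ∈ Icc 0 T,
            HasDerivWithinAt H (H' τ) (Icc 0 T) τ ∧
            H' τ + H τ * (Cᵀ * Sig * C) * H τ
              - (1/γ) • ((eta (T - τ))ᵀ * C * H τ + H τ * (Cᵀ * eta (T - τ)))
              - ((γ - 1)/γ^2) • ((eta (T - τ))ᵀ * Sig⁻¹ * eta (T - τ)) = 0) ∧
      -- the solution is unique
      (∀ K : ℝ → Matrix (Fin N) (Fin N) ℝ,
        (K 0 = 0 ∧
          ∃ K' : ℝ → Matrix (Fin N) (Fin N) ℝ,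
            ContinuousOn K' (Icc 0 T) ∧
            ∀ τ ∈ Icc 0 T,
              HasDerivWithinAt K (K' τ) (Icc 0 T) τ ∧
              K' τ + K τ * (Cᵀ * Sig * C) * K τ
                - (1/γ) • ((eta (T - τ))ᵀ * C * K τ + K τ * (Cᵀ * eta (T - τ)))
                - ((γ - 1)/γ^2) • ((eta (T - τ))ᵀ * Sig⁻¹ * eta (T - τ)) = 0) →
        EqOn K H (Icc 0 T)) ∧
      -- it is symmetric and positive semidefinite on `[0, T]`
      (∀ τ ∈ Icc 0 T, (H τ).IsSymm ∧ (H τ).PosSemidef) ∧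
      -- and positive definite on `(0, T]`
      (∀ τ ∈ Ioc 0 T, (H τ).PosDef) :=
  riccati_futures_and_spot_general N Sig hSig T Tv hT hTv etaFv etaSv hetav γ hγ C hC etaF etaS
    hetaF hetaS eta heta
end

section
/- Let Σ̃ be a 2N×2N real matrix of the block lower-triangular form Σ̃ = [[Σ̃_F, 0],[Σ̃_SF, Σ̃_S]] with N×N blocks, such that Σ := Σ̃Σ̃ᵀ is positive definite (in particular Σ̃_F and Σ̃_S are invertible). Partition Σ into N×N blocks Σ = [[Σ_F, Σ_FS],[Σ_FSᵀ, Σ_S]], let C be the 2N×N matrix obtained by stacking I_N on top of −I_N, and set A := Σ_F + Σ_FSᵀΣ_F^{−1}Σ_FS − Σ_FS − Σ_FSᵀ. Then for every real γ > 1 the identity γ CᵀΣC + (1−γ)A = CᵀΣC + (γ−1) Σ̃_SΣ̃_Sᵀ holds, and the matrix γ CᵀΣC + (1−γ)A is symmetric positive definite. In particular, A = CᵀΣC − (Σ_S − Σ_FSᵀΣ_F^{−1}Σ_FS). -/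
/-!
Blockwise, `Σ = Σ̃Σ̃ᵀ` gives `Σ_F = Σ̃_FΣ̃_Fᵀ`, `Σ_FS = Σ̃_FΣ̃_SFᵀ` and
`Σ_S = Σ̃_SFΣ̃_SFᵀ + Σ̃_SΣ̃_Sᵀ`. Since `Σ̃_F` is invertible (because `Σ` is), the Schur complement
`Σ_S − Σ_FSᵀΣ_F⁻¹Σ_FS` collapses to `Σ̃_SΣ̃_Sᵀ`, so `CᵀΣC − A = Σ̃_SΣ̃_Sᵀ`. Then
`γ CᵀΣC + (1−γ)A` is the positive definite `CᵀΣC` (`C` is injective) plus the positive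
semidefinite `(γ−1) Σ̃_SΣ̃_Sᵀ`.
-/

open Matrix

namespace Matrix

variable {m n R : Type*}

theorem fromBlocks_zero₁₂_mul_transpose [Fintype m] [Fintype n] [CommSemiring R]
    (F : Matrix m m R) (G : Matrix n m R) (S : Matrix n n R) :
    fromBlocks F 0 G S * (fromBlocks F 0 G S)ᵀ =
      fromBlocks (F * Fᵀ) (F * Gᵀ) (G * Fᵀ) (G * Gᵀ + S * Sᵀ) := by
  rw [fromBlocks_transpose, fromBlocks_multiply]
  simp

theorem transpose_mul_inv_mul_self_transpose_mul [Fintype m] [CommRing R] [DecidableEq m]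
    {F : Matrix m m R} (hF : IsUnit F.det) (G : Matrix n m R) :
    (F * Gᵀ)ᵀ * (F * Fᵀ)⁻¹ * (F * Gᵀ) = G * Gᵀ := by
  have hFt : Fᵀ * Fᵀ⁻¹ = 1 := mul_nonsing_inv _ (isUnit_det_transpose _ hF)
  rw [transpose_mul, transpose_transpose, mul_inv_rev]
  calc G * Fᵀ * (Fᵀ⁻¹ * F⁻¹) * (F * Gᵀ) = G * (Fᵀ * Fᵀ⁻¹) * (F⁻¹ * F) * Gᵀ := by
        simp only [Matrix.mul_assoc]
    _ = G * Gᵀ := by rw [hFt, nonsing_inv_mul _ hF, Matrix.mul_one, Matrix.mul_one]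

theorem transpose_fromRows_one_neg_mul_fromBlocks_mul [Fintype n] [Ring R] [DecidableEq n]
    (P Q Q' S : Matrix n n R) :
    (fromRows 1 (-1) : Matrix (n ⊕ n) n R)ᵀ * fromBlocks P Q Q' S *
      (fromRows 1 (-1) : Matrix (n ⊕ n) n R) = P + S - Q - Q' := by
  rw [transpose_fromRows, fromCols_mul_fromBlocks, fromCols_mul_fromRows]
  simp only [transpose_one, transpose_neg, Matrix.one_mul, Matrix.neg_mul, Matrix.mul_one,
    Matrix.mul_neg, neg_neg, neg_add]
  abel

theorem mulVec_fromRows_one_injective [Fintype n] [Semiring R] [DecidableEq n]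
    (B : Matrix m n R) :
    Function.Injective (fromRows (1 : Matrix n n R) B).mulVec := by
  intro x y h
  simpa [fromRows_mulVec] using congrArg (· ∘ Sum.inl) h

theorem PosDef.isUnit_det_of_mul_transpose [Fintype m] [DecidableEq m] {K : Type*} [Field K]
    [PartialOrder K] [StarRing K] {M : Matrix m m K} (h : (M * Mᵀ).PosDef) : IsUnit M.det := by
  have := (isUnit_iff_isUnit_det _).mp h.isUnit
  rw [det_mul] at this
  exact isUnit_of_mul_isUnit_left this

end Matrix

theorem posdef_gamma_combination_general
    (N : ℕ)
    (StF StSF StS : Matrix (Fin N) (Fin N) ℝ)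
    (Stil : Matrix (Fin N ⊕ Fin N) (Fin N ⊕ Fin N) ℝ)
    (hStil : Stil = Matrix.fromBlocks StF 0 StSF StS)
    (Sig : Matrix (Fin N ⊕ Fin N) (Fin N ⊕ Fin N) ℝ)
    (hSig : Sig = Stil * Stilᵀ)
    (hpd : Sig.PosDef)
    (SF SFS SS : Matrix (Fin N) (Fin N) ℝ)
    (hSF : SF = Sig.toBlocks₁₁)
    (hSFS : SFS = Sig.toBlocks₁₂)
    (hSS : SS = Sig.toBlocks₂₂)
    (C : Matrix (Fin N ⊕ Fin N) (Fin N) ℝ)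
    (hC : C = Matrix.fromRows 1 (-1))
    (A : Matrix (Fin N) (Fin N) ℝ)
    (hA : A = SF + SFSᵀ * SF⁻¹ * SFS - SFS - SFSᵀ)
    (γ : ℝ) (hγ : 1 < γ) :
    γ • (Cᵀ * Sig * C) + (1 - γ) • A = Cᵀ * Sig * C + (γ - 1) • (StS * StSᵀ) ∧
    (γ • (Cᵀ * Sig * C) + (1 - γ) • A).PosDef ∧
    A = Cᵀ * Sig * C - (SS - SFSᵀ * SF⁻¹ * SFS) := by
  subst hStil hSig hSF hSFS hSS hC hA
  have hStF : IsUnit StF.det := isUnit_of_mul_isUnit_left <|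
    det_fromBlocks_zero₁₂ StF StSF StS ▸ hpd.isUnit_det_of_mul_transpose
  have hCSC := hpd.conjTranspose_mul_mul_same (mulVec_fromRows_one_injective (-1))
  rw [conjTranspose_eq_transpose_of_trivial] at hCSC
  rw [fromBlocks_zero₁₂_mul_transpose] at hCSC ⊢
  simp only [toBlocks_fromBlocks₁₁, toBlocks_fromBlocks₁₂, toBlocks_fromBlocks₂₂]
  rw [transpose_fromRows_one_neg_mul_fromBlocks_mul] at hCSC ⊢
  rw [transpose_mul_inv_mul_self_transpose_mul hStF, transpose_mul, transpose_transpose]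
  refine ⟨by module, ?_, by abel⟩
  have hStS := (posSemidef_self_mul_conjTranspose StS).smul (sub_nonneg.2 hγ.le)
  rw [conjTranspose_eq_transpose_of_trivial] at hStS
  convert hCSC.add_posSemidef hStS using 1
  module

/-- The identity `γ CᵀΣC + (1−γ)A = CᵀΣC + (γ−1) Σ̃_S Σ̃_Sᵀ`, positive definiteness of
`γ CᵀΣC + (1−γ)A`, and the identity `A = CᵀΣC − (Σ_S − Σ_FSᵀΣ_F⁻¹Σ_FS)`. -/
theorem posdef_gamma_combination
    (N : ℕ) (hN : 0 < N)
    (StF StSF StS : Matrix (Fin N) (Fin N) ℝ)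
    (Stil : Matrix (Fin N ⊕ Fin N) (Fin N ⊕ Fin N) ℝ)
    (hStil : Stil = Matrix.fromBlocks StF 0 StSF StS)
    (Sig : Matrix (Fin N ⊕ Fin N) (Fin N ⊕ Fin N) ℝ)
    (hSig : Sig = Stil * Stilᵀ)
    (hpd : Sig.PosDef)
    (SF SFS SS : Matrix (Fin N) (Fin N) ℝ)
    (hSF : SF = Sig.toBlocks₁₁)
    (hSFS : SFS = Sig.toBlocks₁₂)
    (hSS : SS = Sig.toBlocks₂₂)
    (C : Matrix (Fin N ⊕ Fin N) (Fin N) ℝ)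
    (hC : C = Matrix.fromRows 1 (-1))
    (A : Matrix (Fin N) (Fin N) ℝ)
    (hA : A = SF + SFSᵀ * SF⁻¹ * SFS - SFS - SFSᵀ)
    (γ : ℝ) (hγ : 1 < γ) :
    γ • (Cᵀ * Sig * C) + (1 - γ) • A = Cᵀ * Sig * C + (γ - 1) • (StS * StSᵀ) ∧
    (γ • (Cᵀ * Sig * C) + (1 - γ) • A).PosDef ∧
    A = Cᵀ * Sig * C - (SS - SFSᵀ * SF⁻¹ * SFS) :=
  posdef_gamma_combination_general N StF StSF StS Stil hStil Sig hSig hpd SF SFS SS hSF hSFS hSS C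
    hC A hA γ hγ
end

section
/- Under the stated setup, let H : [0,T] → ℝ^{N×N} be a continuously differentiable symmetric-matrix-valued function with H(0) = 0 satisfying, for all τ ∈ [0,T], H'(τ) + H(τ)(γ CᵀΣC + (1−γ)A)H(τ) − L(τ)H(τ) − H(τ)L(τ)ᵀ − ((γ−1)/γ²) η_F(T−τ)ᵀΣ_F^{−1}η_F(T−τ) = 0, where L(τ) := η(T−τ)ᵀC + (1/γ−1)η_F(T−τ)ᵀB. Let g : [0,T] → ℝ^N be continuously differentiable with g(0) = 0 and g'(τ) = [ η(T−τ)ᵀC − γ H(τ)CᵀΣC − (1−γ)H(τ)A + (1/γ−1)η_F(T−τ)ᵀB ] g(τ) − H(τ)( m + (1/γ−1)Bᵀμ_F ) + ((1−γ)/γ²) η_F(T−τ)ᵀΣ_F^{−1}μ_F. Define f(τ) := ((1−γ)/γ)( r + μ_FᵀΣ_F^{−1}μ_F/(2γ) )τ + ∫_0^τ [ (1/2) g(u)ᵀ((1−γ)A + γ CᵀΣC)g(u) + ( m + (1/γ−1)Bᵀμ_F )ᵀ g(u) − (1/2) tr( CᵀΣC H(u) ) ] du, and define v(t,x,z) :=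 (x^{1−γ}/(1−γ)) exp( γ( f(T−t) + zᵀg(T−t) − (1/2) zᵀH(T−t)z ) ) for (t,x,z) ∈ [0,T]×(0,∞)×ℝ^N. Then v(T,x,z) = x^{1−γ}/(1−γ), and at every (t,x,z) ∈ [0,T]×(0,∞)×ℝ^N the partial derivatives of v satisfy v_t + (m + Cᵀη(t)z)ᵀ v_z + (1/2) tr( CᵀΣC v_zz ) + r x v_x − (1/2)(μ_F + η_F(t)z)ᵀΣ_F^{−1}(μ_F + η_F(t)z) v_x²/v_xx − (1/(2 v_xx)) v_xzᵀ A v_xz − (v_x/v_xx) (μ_F + η_F(t)z)ᵀ B v_xz = 0, where v_z denotes the gradient of v in z, v_zz the Hessian in z, v_x and v_xx the first and second partial derivatives in x, and v_xz the gradient in z of v_x. -/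
/-!
Put `τ = T - t`, `Θ = f τ + zᵀ g τ - zᵀ H τ z / 2` and `w = ∇_z Θ = g τ - H τ z`, so that
`v = x^{1-γ}/(1-γ) · exp(γ Θ)`. Every partial derivative of `v` is `v` times a polynomial in `z`,
and `x v_x = (1-γ) v`, `v_x²/v_xx = -(1-γ) v/γ`; hence the HJB expression is `γ v` times
`-∂_τΘ + (m + Cᵀη z)·w + wᵀ M w/2 - tr(CᵀΣC H)/2 + (1-γ)/γ (r + pᵀΣ_F⁻¹p/(2γ) + pᵀB w)`
with `M = γ CᵀΣC + (1-γ) A` and `p = μ_F + η_F z`. Since `∂_τΘ = f' + zᵀg' - zᵀH'z/2`, this is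
a quadratic polynomial in `z`; its quadratic part vanishes by the Riccati equation for `H`, its
linear part by the ODE for `g`, and its constant part by the definition of `f`.
-/

open Matrix Set

attribute [local instance] Matrix.normedAddCommGroup Matrix.normedSpace

theorem Matrix.mulVec_dotProduct {m n α : Type*} [Fintype m] [Fintype n] [NonUnitalCommSemiring α]
    (X : Matrix m n α) (a : n → α) (b : m → α) : (X *ᵥ a) ⬝ᵥ b = a ⬝ᵥ (Xᵀ *ᵥ b) := by
  rw [dotProduct_transpose_mulVec, dotProduct_comm]

section DerivDotProduct

variable {ι κ : Type*} [Fintype ι] {u w : ℝ → ι → ℝ} {u' w' : ι → ℝ} {s : Set ℝ} {t : ℝ}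

theorem HasDerivWithinAt.dotProduct (hu : HasDerivWithinAt u u' s t)
    (hw : HasDerivWithinAt w w' s t) :
    HasDerivWithinAt (fun τ => u τ ⬝ᵥ w τ) (u' ⬝ᵥ w t + u t ⬝ᵥ w') s t := by
  have h := HasDerivWithinAt.fun_sum (u := Finset.univ) fun i _ =>
    (hasDerivWithinAt_pi.1 hu i).fun_mul (hasDerivWithinAt_pi.1 hw i)
  rwa [Finset.sum_add_distrib] at h

theorem HasDerivAt.dotProduct (hu : HasDerivAt u u' t) (hw : HasDerivAt w w' t) :
    HasDerivAt (fun τ => u τ ⬝ᵥ w τ) (u' ⬝ᵥ w t + u t ⬝ᵥ w') t :=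
  (hu.hasDerivWithinAt.dotProduct hw.hasDerivWithinAt).hasDerivAt Filter.univ_mem

theorem HasDerivWithinAt.mulVec {M : ℝ → Matrix κ ι ℝ} {M' : Matrix κ ι ℝ}
    (hM : HasDerivWithinAt M M' s t) (hu : HasDerivWithinAt u u' s t) :
    HasDerivWithinAt (fun τ => M τ *ᵥ u τ) (M' *ᵥ u t + M t *ᵥ u') s t :=
  hasDerivWithinAt_pi.2 fun i => (hasDerivWithinAt_pi.1 hM i).dotProduct hu

theorem HasDerivAt.mulVec {M : ℝ → Matrix κ ι ℝ} {M' : Matrix κ ι ℝ}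
    (hM : HasDerivAt M M' t) (hu : HasDerivAt u u' t) :
    HasDerivAt (fun τ => M τ *ᵥ u τ) (M' *ᵥ u t + M t *ᵥ u') t :=
  hasDerivAt_pi.2 fun i => (hasDerivAt_pi.1 hM i).dotProduct hu

end DerivDotProduct

theorem hasDerivWithinAt_integral_Icc {E : Type*} [NormedAddCommGroup E] [NormedSpace ℝ E]
    [CompleteSpace E] {φ : ℝ → E} {a b τ : ℝ} (hφ : ContinuousOn φ (Icc a b))
    (hτ : τ ∈ Icc a b) :
    HasDerivWithinAt (fun t => ∫ u in a..t, φ u) (φ τ) (Icc a b) τ := by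
  have : Fact (τ ∈ Icc a b) := ⟨hτ⟩
  exact intervalIntegral.integral_hasDerivWithinAt_right
    (hφ.mono (uIcc_subset_Icc (left_mem_Icc.2 (hτ.1.trans hτ.2)) hτ)).intervalIntegrable
    (hφ.stronglyMeasurableAtFilter_nhdsWithin measurableSet_Icc τ) (hφ τ hτ)

theorem hasDerivWithinAt_of_eq_mul_add_integral {f φ : ℝ → ℝ} {c a b τ : ℝ}
    (hf : ∀ t, f t = c * t + ∫ u in a..t, φ u) (hφ : ContinuousOn φ (Icc a b))
    (hτ : τ ∈ Icc a b) : HasDerivWithinAt f (c + φ τ) (Icc a b) τ := by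
  rw [funext hf]
  have h := ((hasDerivWithinAt_id τ _).const_mul c).fun_add (hasDerivWithinAt_integral_Icc hφ hτ)
  rwa [mul_one] at h

theorem HasDerivWithinAt.comp_const_sub_Icc {f : ℝ → ℝ} {f' T t : ℝ}
    (hf : HasDerivWithinAt f f' (Icc 0 T) (T - t)) :
    HasDerivWithinAt (fun s => f (T - s)) (-f') (Icc 0 T) t := by
  have hmaps : MapsTo (T - ·) (Icc 0 T) (Icc 0 T) := fun s hs =>
    ⟨sub_nonneg.2 hs.2, sub_le_self T hs.1⟩
  simpa [Function.comp_def] using hf.comp t ((hasDerivWithinAt_id t _).const_sub T) hmaps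

theorem Real.hasDerivAt_rpow_div_mul_const {p y : ℝ} (hp : p ≠ 0) (hy : 0 < y) (c : ℝ) :
    HasDerivAt (fun y => y ^ p / p * c) (y ^ (p - 1) * c) y := by
  refine (((Real.hasDerivAt_rpow_const (Or.inl hy.ne')).div_const p).mul_const c).congr_deriv ?_
  field_simp

section QuadraticExponent

variable {ι : Type*} [Fintype ι]

noncomputable def quadraticExponent (c : ℝ) (g : ι → ℝ) (H : Matrix ι ι ℝ) (z : ι → ℝ) : ℝ :=
  c + z ⬝ᵥ g - 1/2 * (z ⬝ᵥ (H *ᵥ z))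

theorem hasDerivWithinAt_quadraticExponent {c : ℝ → ℝ} {g : ℝ → ι → ℝ} {H : ℝ → Matrix ι ι ℝ}
    {c' : ℝ} {g' : ι → ℝ} {H' : Matrix ι ι ℝ} {s : Set ℝ} {τ : ℝ}
    (hc : HasDerivWithinAt c c' s τ) (hg : HasDerivWithinAt g g' s τ)
    (hH : HasDerivWithinAt H H' s τ) (z : ι → ℝ) :
    HasDerivWithinAt (fun τ => quadraticExponent (c τ) (g τ) (H τ) z)
      (c' + z ⬝ᵥ g' - 1/2 * (z ⬝ᵥ (H' *ᵥ z))) s τ := by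
  have hz : HasDerivWithinAt (fun _ => z) 0 s τ := hasDerivWithinAt_const τ s z
  refine ((hc.add (hz.dotProduct hg)).sub
    ((hz.dotProduct (hH.mulVec hz)).const_mul (1/2))).congr_deriv ?_
  simp

variable [DecidableEq ι] {H : Matrix ι ι ℝ}

theorem hasDerivAt_quadraticExponent_update (hH : H.IsSymm) (c : ℝ) (g z : ι → ℝ) (i : ι) :
    HasDerivAt (fun s => quadraticExponent c g H (Function.update z i s)) ((g - H *ᵥ z) i)
      (z i) := by
  have hu := hasDerivAt_update z i (z i)
  have hHz : z ⬝ᵥ H *ᵥ Pi.single i 1 = (H *ᵥ z) i := by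
    rw [← dotProduct_transpose_mulVec, hH.eq, single_dotProduct, one_mul]
  refine (((hu.dotProduct (hasDerivAt_const _ g)).const_add c).sub
    ((hu.dotProduct ((hasDerivAt_const _ H).mulVec hu)).const_mul (1/2))).congr_deriv ?_
  simp only [Function.update_eq_self, dotProduct_zero, add_zero, zero_mulVec, zero_add,
    single_dotProduct, one_mul, hHz, Pi.sub_apply]
  ring

theorem hasDerivAt_mul_exp_quadraticExponent_update (hH : H.IsSymm) (K γ c : ℝ) (g z : ι → ℝ)
    (i : ι) :
    HasDerivAt (fun s => K * Real.exp (γ * quadraticExponent c g H (Function.update z i s)))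
      (γ * (K * Real.exp (γ * quadraticExponent c g H z)) * (g - H *ᵥ z) i) (z i) := by
  refine ((((hasDerivAt_quadraticExponent_update hH c g z i).const_mul γ).exp).const_mul
    K).congr_deriv ?_
  simp only [Function.update_eq_self]
  ring

theorem hasDerivAt_gradient_mul_exp_quadraticExponent_update (hH : H.IsSymm) (K γ c : ℝ)
    (g z : ι → ℝ) (i j : ι) :
    HasDerivAt (fun s => γ * (K * Real.exp (γ * quadraticExponent c g H (Function.update z j s)))
        * (g - H *ᵥ Function.update z j s) i)
      (K * Real.exp (γ * quadraticExponent c g H z)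
        * (γ ^ 2 * (g - H *ᵥ z) i * (g - H *ᵥ z) j - γ * H i j)) (z j) := by
  have hw := hasDerivAt_pi.1 ((hasDerivAt_const _ g).sub
    ((hasDerivAt_const _ H).mulVec (hasDerivAt_update z j (z j)))) i
  refine (((hasDerivAt_mul_exp_quadraticExponent_update hH K γ c g z j).const_mul γ).fun_mul
    hw).congr_deriv ?_
  simp only [Pi.sub_apply, Function.update_eq_self, zero_mulVec, mulVec_single, one_smul,
    MulOpposite.op_one, zero_add, Pi.zero_apply, col_apply, zero_sub, mul_neg]
  ring

end QuadraticExponent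

section AnsatzDerivatives

theorem eq_of_hasDerivWithinAt_exp_comp_const_sub {Θ V : ℝ → ℝ} {Θ' K γ T t Vt : ℝ}
    (hT : 0 < T) (ht : t ∈ Icc 0 T) (hΘ : HasDerivWithinAt Θ Θ' (Icc 0 T) (T - t))
    (hV : ∀ s, V s = K * Real.exp (γ * Θ (T - s))) (h : HasDerivWithinAt V Vt (Icc 0 T) t) :
    Vt = K * Real.exp (γ * Θ (T - t)) * (γ * -Θ') := by
  rw [funext hV] at h
  rw [(uniqueDiffOn_Icc hT t ht).eq_deriv _ h
    ((hΘ.comp_const_sub_Icc.const_mul γ).exp.const_mul K), mul_assoc]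

theorem eq_rpow_neg_mul_of_hasDerivAt {V : ℝ → ℝ} {γ E y Vx : ℝ} (hγ : γ ≠ 1)
    (hV : ∀ y, V y = y ^ (1 - γ) / (1 - γ) * E) (hy : 0 < y) (h : HasDerivAt V Vx y) :
    Vx = y ^ (-γ) * E := by
  rw [funext hV] at h
  simpa only [sub_sub_cancel_left] using
    h.unique (Real.hasDerivAt_rpow_div_mul_const (sub_ne_zero.2 hγ.symm) hy E)

theorem eq_neg_mul_rpow_mul_of_hasDerivAt {Vx : ℝ → ℝ} {γ E x Vxx : ℝ} (hx : 0 < x)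
    (hVx : ∀ y ∈ Ioi 0, Vx y = y ^ (-γ) * E) (h : HasDerivAt Vx Vxx x) :
    Vxx = -γ * x ^ (-γ - 1) * E := by
  have hVx_nhds : Vx =ᶠ[nhds x] fun y => y ^ (-γ) * E :=
    Filter.eventually_of_mem (Ioi_mem_nhds hx) hVx
  exact h.unique (((Real.hasDerivAt_rpow_const (Or.inl hx.ne')).mul_const E).congr_of_eventuallyEq
    hVx_nhds)

variable {ι : Type*} [Fintype ι] [DecidableEq ι] {γ c K : ℝ} {g z : ι → ℝ}
  {H : Matrix ι ι ℝ}

theorem eq_of_hasDerivAt_update_mul_exp (hH : H.IsSymm) {W : (ι → ℝ) → ℝ}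
    (hW : ∀ z, W z = K * Real.exp (γ * quadraticExponent c g H z)) {i : ι} {W' : ℝ}
    (h : HasDerivAt (fun s => W (Function.update z i s)) W' (z i)) :
    W' = γ * (K * Real.exp (γ * quadraticExponent c g H z)) * (g - H *ᵥ z) i := by
  simp only [hW] at h
  exact h.unique (hasDerivAt_mul_exp_quadraticExponent_update hH K γ c g z i)

theorem eq_of_hasDerivAt_update_gradient (hH : H.IsSymm) {Wz : (ι → ℝ) → ι → ℝ}
    (hWz : ∀ z i, Wz z i = γ * (K * Real.exp (γ * quadraticExponent c g H z)) * (g - H *ᵥ z) i)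
    {i j : ι} {W'' : ℝ} (h : HasDerivAt (fun s => Wz (Function.update z j s) i) W'' (z j)) :
    W'' = K * Real.exp (γ * quadraticExponent c g H z)
      * (γ ^ 2 * (g - H *ᵥ z) i * (g - H *ᵥ z) j - γ * H i j) := by
  simp only [hWz] at h
  exact h.unique (hasDerivAt_gradient_mul_exp_quadraticExponent_update hH K γ c g z i j)

end AnsatzDerivatives

section Algebra

variable {n k : Type*} [Fintype n] [Fintype k]

theorem Matrix.IsSymm.add_transpose_mul_inv_mul_sub_sub {α : Type*} [CommRing α] [DecidableEq n]
    {S : Matrix n n α} (hS : S.IsSymm) (B : Matrix n n α) :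
    (S + Bᵀ * S⁻¹ * B - B - Bᵀ).IsSymm := by
  simp only [IsSymm, transpose_sub, transpose_add, transpose_mul, transpose_transpose, hS.eq,
    hS.inv.eq, Matrix.mul_assoc]
  abel

theorem exponent_deriv_eq_hamiltonian {γ r : ℝ} (hγ : γ ≠ 0) {Sig : Matrix k k ℝ}
    (hSig : Sig.IsSymm) {P A B H H' EF : Matrix n n ℝ} (hP : P.IsSymm) (hA : A.IsSymm)
    (hH : H.IsSymm) {C E : Matrix k n ℝ} {m μ g g' : n → ℝ} (z : n → ℝ)
    (hric : H' + H * (γ • (Cᵀ * Sig * C) + (1 - γ) • A) * H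
        - (Eᵀ * C + (1/γ - 1) • (EFᵀ * B)) * H - H * (Eᵀ * C + (1/γ - 1) • (EFᵀ * B))ᵀ
        - ((γ - 1)/γ^2) • (EFᵀ * P * EF) = 0)
    (hode : g' = (Eᵀ * C - γ • (H * (Cᵀ * Sig * C)) - (1 - γ) • (H * A)
            + (1/γ - 1) • (EFᵀ * B)) *ᵥ g
          - H *ᵥ (m + (1/γ - 1) • (Bᵀ *ᵥ μ))
          + ((1 - γ)/γ^2) • ((EFᵀ * P) *ᵥ μ)) :
    (1 - γ)/γ * (r + (μ ⬝ᵥ (P *ᵥ μ))/(2*γ))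
      + ((1/2) * (g ⬝ᵥ (((1 - γ) • A + γ • (Cᵀ * Sig * C)) *ᵥ g))
        + (m + (1/γ - 1) • (Bᵀ *ᵥ μ)) ⬝ᵥ g - (1/2) * trace (Cᵀ * Sig * C * H))
      + z ⬝ᵥ g' - 1/2 * (z ⬝ᵥ (H' *ᵥ z))
    = (m + (Cᵀ * E) *ᵥ z) ⬝ᵥ (g - H *ᵥ z)
      + 1/2 * ((g - H *ᵥ z) ⬝ᵥ ((γ • (Cᵀ * Sig * C) + (1 - γ) • A) *ᵥ (g - H *ᵥ z)))
      - 1/2 * trace (Cᵀ * Sig * C * H)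
      + (1 - γ)/γ * (r + ((μ + EF *ᵥ z) ⬝ᵥ (P *ᵥ (μ + EF *ᵥ z)))/(2*γ)
        + (μ + EF *ᵥ z) ⬝ᵥ (B *ᵥ (g - H *ᵥ z))) := by
  have hCE : z ⬝ᵥ (H * (Cᵀ * E)) *ᵥ z = z ⬝ᵥ (Eᵀ * (C * H)) *ᵥ z := by
    rw [← dotProduct_transpose_mulVec]
    simp only [transpose_mul, transpose_transpose, hH.eq, Matrix.mul_assoc]
  have hBEF : z ⬝ᵥ (H * (Bᵀ * EF)) *ᵥ z = z ⬝ᵥ (EFᵀ * (B * H)) *ᵥ z := by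
    rw [← dotProduct_transpose_mulVec]
    simp only [transpose_mul, transpose_transpose, hH.eq, Matrix.mul_assoc]
  have hric_z := congrArg (fun X => z ⬝ᵥ (X *ᵥ z)) hric
  rw [hode]
  -- normal form: sums of `a ⬝ᵥ X *ᵥ b`, with `z` as `a` whenever it occurs
  simp only [add_mulVec, sub_mulVec, smul_mulVec, zero_mulVec, mulVec_mulVec, mulVec_add,
    mulVec_sub, mulVec_smul, dotProduct_add, dotProduct_sub, dotProduct_smul, add_dotProduct,
    sub_dotProduct, smul_dotProduct, dotProduct_zero, smul_eq_mul, transpose_add, transpose_mul,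
    transpose_smul, transpose_transpose, hH.eq, hA.eq, hP.eq, hSig.eq, Matrix.mul_add,
    Matrix.add_mul, Matrix.mul_smul, Matrix.smul_mul, Matrix.mul_assoc, mulVec_dotProduct,
    ← dotProduct_transpose_mulVec _ z g, ← dotProduct_transpose_mulVec _ z m,
    ← dotProduct_transpose_mulVec _ z μ, hCE, hBEF] at hric_z ⊢
  linear_combination (norm := (field_simp; ring)) (-1/2 : ℝ) * hric_z

theorem hjb_eq_zero_of_exponent_deriv_eq {γ r x E Θ' : ℝ} {b p w : n → ℝ}
    {K P A B H : Matrix n n ℝ} (hγ : γ ≠ 0) (hγ1 : 1 - γ ≠ 0) (hx : 0 < x)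
    {Vt Vx Vxx : ℝ} {Vz Vxz : n → ℝ} {Vzz : Matrix n n ℝ}
    (hVt : Vt = x ^ (1 - γ) / (1 - γ) * E * (γ * -Θ'))
    (hVx : Vx = x ^ (-γ) * E) (hVxx : Vxx = -γ * x ^ (-γ - 1) * E)
    (hVz : ∀ i, Vz i = γ * (x ^ (1 - γ) / (1 - γ) * E) * w i)
    (hVxz : ∀ i, Vxz i = γ * (x ^ (-γ) * E) * w i)
    (hVzz : ∀ i j, Vzz i j = x ^ (1 - γ) / (1 - γ) * E * (γ ^ 2 * w i * w j - γ * H i j))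
    (hΘ' : Θ' = b ⬝ᵥ w + 1/2 * (w ⬝ᵥ ((γ • K + (1 - γ) • A) *ᵥ w)) - 1/2 * trace (K * H)
        + (1 - γ)/γ * (r + (p ⬝ᵥ (P *ᵥ p))/(2*γ) + p ⬝ᵥ (B *ᵥ w))) :
    Vt + b ⬝ᵥ Vz + 1/2 * trace (K * Vzz) + r * x * Vx - 1/2 * (p ⬝ᵥ (P *ᵥ p)) * Vx ^ 2 / Vxx
      - 1/(2 * Vxx) * (Vxz ⬝ᵥ (A *ᵥ Vxz)) - Vx / Vxx * (p ⬝ᵥ (B *ᵥ Vxz)) = 0 := by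
  have hx1 : x ^ (1 - γ) = x ^ (-γ) * x := by
    rw [sub_eq_neg_add, Real.rpow_add hx, Real.rpow_one]
  have hx2 : x ^ (-γ - 1) = x ^ (-γ) / x := by
    rw [Real.rpow_sub hx, Real.rpow_one]
  have hpow : x ^ (-γ) ≠ 0 := (Real.rpow_pos_of_pos hx _).ne'
  obtain rfl : Vz = (γ * (x ^ (1 - γ) / (1 - γ) * E)) • w := funext hVz
  obtain rfl : Vxz = (γ * (x ^ (-γ) * E)) • w := funext hVxz
  obtain rfl : Vzz = (x ^ (1 - γ) / (1 - γ) * E) • (γ ^ 2 • vecMulVec w w - γ • H) := by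
    ext i j
    simp only [hVzz, Matrix.smul_apply, Matrix.sub_apply, vecMulVec_apply, smul_eq_mul]
    ring
  subst hVt hVx hVxx hΘ'
  simp only [Matrix.mul_smul, Matrix.mul_sub, trace_smul, trace_sub, mul_vecMulVec,
    trace_vecMulVec, dotProduct_smul, smul_dotProduct, mulVec_smul, add_mulVec, smul_mulVec,
    dotProduct_add, smul_eq_mul, dotProduct_comm (K *ᵥ w), hx1, hx2]
  field_simp
  ring

end Algebra

theorem hjb_verification_futures_only_general
    (N : ℕ)
    -- the covariance matrix and its blocks
    (SF SFS SS : Matrix (Fin N) (Fin N) ℝ)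
    (Sig : Matrix (Fin N ⊕ Fin N) (Fin N ⊕ Fin N) ℝ)
    (hSigdef : Sig = Matrix.fromBlocks SF SFS SFSᵀ SS)
    (hSig : Sig.PosDef)
    -- the time horizon, maturities, and basis parameters
    (T : ℝ) (hT : 0 < T)
    (γ r : ℝ) (hγ : 1 < γ)
    (m μF : Fin N → ℝ)
    (C : Matrix (Fin N ⊕ Fin N) (Fin N) ℝ)
    (etaF : ℝ → Matrix (Fin N) (Fin N) ℝ)
    (eta : ℝ → Matrix (Fin N ⊕ Fin N) (Fin N) ℝ)
    (A B : Matrix (Fin N) (Fin N) ℝ)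
    (hA : A = SF + SFSᵀ * SF⁻¹ * SFS - SFS - SFSᵀ)
    (L : ℝ → Matrix (Fin N) (Fin N) ℝ)
    (hL : ∀ τ, L τ = (eta (T - τ))ᵀ * C + (1/γ - 1) • ((etaF (T - τ))ᵀ * B))
    -- the function `H`: C¹ symmetric solution of the Riccati equation with `H(0) = 0`
    (H H' : ℝ → Matrix (Fin N) (Fin N) ℝ)
    (hHderiv : ∀ τ ∈ Icc 0 T, HasDerivWithinAt H (H' τ) (Icc 0 T) τ)
    (hHsymm : ∀ τ ∈ Icc 0 T, (H τ).IsSymm)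
    (hH0 : H 0 = 0)
    (hHric : ∀ τ ∈ Icc 0 T,
      H' τ + H τ * (γ • (Cᵀ * Sig * C) + (1 - γ) • A) * H τ
        - L τ * H τ - H τ * (L τ)ᵀ
        - ((γ - 1)/γ^2) • ((etaF (T - τ))ᵀ * SF⁻¹ * etaF (T - τ)) = 0)
    -- the function `g`: C¹ solution of the linear ODE with `g(0) = 0`
    (g g' : ℝ → (Fin N → ℝ))
    (hgderiv : ∀ τ ∈ Icc 0 T, HasDerivWithinAt g (g' τ) (Icc 0 T) τ)
    (hg0 : g 0 = 0)
    (hgode : ∀ τ ∈ Icc 0 T,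
      g' τ = ((eta (T - τ))ᵀ * C - γ • (H τ * (Cᵀ * Sig * C)) - (1 - γ) • (H τ * A)
            + (1/γ - 1) • ((etaF (T - τ))ᵀ * B)) *ᵥ g τ
          - H τ *ᵥ (m + (1/γ - 1) • (Bᵀ *ᵥ μF))
          + ((1 - γ)/γ^2) • (((etaF (T - τ))ᵀ * SF⁻¹) *ᵥ μF))
    -- the function `f`
    (f : ℝ → ℝ)
    (hf : ∀ τ, f τ =
      (1 - γ)/γ * (r + (μF ⬝ᵥ (SF⁻¹ *ᵥ μF))/(2*γ)) * τ
      + ∫ u in (0:ℝ)..τ,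
          ((1/2) * (g u ⬝ᵥ (((1 - γ) • A + γ • (Cᵀ * Sig * C)) *ᵥ g u))
            + (m + (1/γ - 1) • (Bᵀ *ᵥ μF)) ⬝ᵥ g u
            - (1/2) * Matrix.trace (Cᵀ * Sig * C * H u)))
    -- the candidate value function
    (v : ℝ → ℝ → (Fin N → ℝ) → ℝ)
    (hv : ∀ t x z, v t x z =
      x ^ (1 - γ) / (1 - γ) *
        Real.exp (γ * (f (T - t) + z ⬝ᵥ g (T - t) - (1/2) * (z ⬝ᵥ (H (T - t) *ᵥ z)))))
    -- its partial derivatives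
    (vt vx vxx : ℝ → ℝ → (Fin N → ℝ) → ℝ)
    (vz vxz : ℝ → ℝ → (Fin N → ℝ) → (Fin N → ℝ))
    (vzz : ℝ → ℝ → (Fin N → ℝ) → Matrix (Fin N) (Fin N) ℝ)
    (hvt : ∀ t ∈ Icc 0 T, ∀ x ∈ Ioi (0:ℝ), ∀ z,
      HasDerivWithinAt (fun s => v s x z) (vt t x z) (Icc 0 T) t)
    (hvx : ∀ t ∈ Icc 0 T, ∀ x ∈ Ioi (0:ℝ), ∀ z,
      HasDerivAt (fun y => v t y z) (vx t x z) x)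
    (hvxx : ∀ t ∈ Icc 0 T, ∀ x ∈ Ioi (0:ℝ), ∀ z,
      HasDerivAt (fun y => vx t y z) (vxx t x z) x)
    (hvz : ∀ t ∈ Icc 0 T, ∀ x ∈ Ioi (0:ℝ), ∀ z, ∀ i,
      HasDerivAt (fun s => v t x (Function.update z i s)) (vz t x z i) (z i))
    (hvzz : ∀ t ∈ Icc 0 T, ∀ x ∈ Ioi (0:ℝ), ∀ z, ∀ i j,
      HasDerivAt (fun s => vz t x (Function.update z j s) i) (vzz t x z i j) (z j))
    (hvxz : ∀ t ∈ Icc 0 T, ∀ x ∈ Ioi (0:ℝ), ∀ z, ∀ i,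
      HasDerivAt (fun s => vx t x (Function.update z i s)) (vxz t x z i) (z i)) :
    -- terminal condition
    (∀ x : ℝ, 0 < x → ∀ z, v T x z = x ^ (1 - γ) / (1 - γ)) ∧
    -- the reduced HJB equation
    (∀ t ∈ Icc 0 T, ∀ x ∈ Ioi (0:ℝ), ∀ z,
      vt t x z
        + (m + ((Cᵀ * eta t) *ᵥ z)) ⬝ᵥ vz t x z
        + (1/2) * Matrix.trace (Cᵀ * Sig * C * vzz t x z)
        + r * x * vx t x z
        - (1/2) * ((μF + (etaF t *ᵥ z)) ⬝ᵥ (SF⁻¹ *ᵥ (μF + (etaF t *ᵥ z))))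
            * (vx t x z)^2 / vxx t x z
        - (1/(2 * vxx t x z)) * (vxz t x z ⬝ᵥ (A *ᵥ vxz t x z))
        - (vx t x z / vxx t x z) * ((μF + (etaF t *ᵥ z)) ⬝ᵥ (B *ᵥ vxz t x z))
        = 0) := by
  have hγ0 : γ ≠ 0 := (zero_lt_one.trans hγ).ne'
  refine ⟨fun x _ z => ?_, fun t ht x hx z => ?_⟩
  · rw [hv, sub_self, hf, hg0, hH0]
    simp
  have hτ : T - t ∈ Icc 0 T := ⟨sub_nonneg.2 ht.2, sub_le_self T ht.1⟩
  have hSig' : Sig.IsSymm := isHermitian_iff_isSymm.1 hSig.isHermitian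
  have hSF : SF.IsSymm := (isSymm_fromBlocks_iff.1 (hSigdef ▸ hSig')).1
  have hgc : ContinuousOn g (Icc 0 T) := fun τ hτ => (hgderiv τ hτ).continuousWithinAt
  have hHc : ContinuousOn H (Icc 0 T) := fun τ hτ => (hHderiv τ hτ).continuousWithinAt
  have hΘ := hasDerivWithinAt_quadraticExponent
    (hasDerivWithinAt_of_eq_mul_add_integral hf (by fun_prop) hτ) (hgderiv _ hτ) (hHderiv _ hτ) z
  have hvx_eq : ∀ y ∈ Ioi (0 : ℝ), ∀ z, vx t y z
      = y ^ (-γ) * Real.exp (γ * quadraticExponent (f (T - t)) (g (T - t)) (H (T - t)) z) :=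
    fun y hy z => eq_rpow_neg_mul_of_hasDerivAt hγ.ne' (hv t · z) hy (hvx t ht y hy z)
  have hvz_eq := fun z i => eq_of_hasDerivAt_update_mul_exp (hHsymm _ hτ) (hv t x)
    (hvz t ht x hx z i)
  exact hjb_eq_zero_of_exponent_deriv_eq hγ0 (sub_ne_zero.2 hγ.ne) hx
    (eq_of_hasDerivWithinAt_exp_comp_const_sub hT ht hΘ (hv · x z) (hvt t ht x hx z))
    (hvx_eq x hx z) (eq_neg_mul_rpow_mul_of_hasDerivAt hx (hvx_eq · · z) (hvxx t ht x hx z))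
    (hvz_eq z)
    (fun i => eq_of_hasDerivAt_update_mul_exp (hHsymm _ hτ) (hvx_eq x hx) (hvxz t ht x hx z i))
    (fun i j => eq_of_hasDerivAt_update_gradient (hHsymm _ hτ) hvz_eq (hvzz t ht x hx z i j))
    (exponent_deriv_eq_hamiltonian hγ0 hSig' hSF.inv
      (hA ▸ hSF.add_transpose_mul_inv_mul_sub_sub SFS) (hHsymm _ hτ) z
      (by simpa only [hL, sub_sub_cancel] using hHric _ hτ)
      (by simpa only [sub_sub_cancel] using hgode _ hτ))

/-- Verification core for the futures-only optimal trading problem: the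
exponential-quadratic ansatz built from the solutions `H`, `g` of the Riccati system and
the integral `f` satisfies the terminal condition and the reduced HJB equation. -/
theorem hjb_verification_futures_only
    (N : ℕ) (hN : 0 < N)
    -- the covariance matrix and its blocks
    (SF SFS SS : Matrix (Fin N) (Fin N) ℝ)
    (Sig : Matrix (Fin N ⊕ Fin N) (Fin N ⊕ Fin N) ℝ)
    (hSigdef : Sig = Matrix.fromBlocks SF SFS SFSᵀ SS)
    (hSig : Sig.PosDef)
    -- the time horizon, maturities, and basis parameters
    (T : ℝ) (Tv : Fin N → ℝ) (hT : 0 < T) (hTv : ∀ i, T < Tv i)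
    (etaFv etaSv : Fin N → ℝ) (hetav : ∀ i, etaFv i < etaSv i)
    (γ r : ℝ) (hγ : 1 < γ)
    (m μF : Fin N → ℝ)
    (C : Matrix (Fin N ⊕ Fin N) (Fin N) ℝ) (hC : C = Matrix.fromRows 1 (-1))
    (etaF etaS : ℝ → Matrix (Fin N) (Fin N) ℝ)
    (hetaF : ∀ t, etaF t = Matrix.diagonal fun i => etaFv i / (Tv i - t))
    (hetaS : ∀ t, etaS t = Matrix.diagonal fun i => etaSv i / (Tv i - t))
    (eta : ℝ → Matrix (Fin N ⊕ Fin N) (Fin N) ℝ)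
    (heta : ∀ t, eta t = Matrix.fromRows (etaF t) (etaS t))
    (A B : Matrix (Fin N) (Fin N) ℝ)
    (hA : A = SF + SFSᵀ * SF⁻¹ * SFS - SFS - SFSᵀ)
    (hB : B = 1 - SF⁻¹ * SFS)
    (L : ℝ → Matrix (Fin N) (Fin N) ℝ)
    (hL : ∀ τ, L τ = (eta (T - τ))ᵀ * C + (1/γ - 1) • ((etaF (T - τ))ᵀ * B))
    -- the function `H`: C¹ symmetric solution of the Riccati equation with `H(0) = 0`
    (H H' : ℝ → Matrix (Fin N) (Fin N) ℝ)
    (hHderiv : ∀ τ ∈ Icc 0 T, HasDerivWithinAt H (H' τ) (Icc 0 T) τ)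
    (hH'cont : ContinuousOn H' (Icc 0 T))
    (hHsymm : ∀ τ ∈ Icc 0 T, (H τ).IsSymm)
    (hH0 : H 0 = 0)
    (hHric : ∀ τ ∈ Icc 0 T,
      H' τ + H τ * (γ • (Cᵀ * Sig * C) + (1 - γ) • A) * H τ
        - L τ * H τ - H τ * (L τ)ᵀ
        - ((γ - 1)/γ^2) • ((etaF (T - τ))ᵀ * SF⁻¹ * etaF (T - τ)) = 0)
    -- the function `g`: C¹ solution of the linear ODE with `g(0) = 0`
    (g g' : ℝ → (Fin N → ℝ))
    (hgderiv : ∀ τ ∈ Icc 0 T, HasDerivWithinAt g (g' τ) (Icc 0 T) τ)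
    (hg'cont : ContinuousOn g' (Icc 0 T))
    (hg0 : g 0 = 0)
    (hgode : ∀ τ ∈ Icc 0 T,
      g' τ = ((eta (T - τ))ᵀ * C - γ • (H τ * (Cᵀ * Sig * C)) - (1 - γ) • (H τ * A)
            + (1/γ - 1) • ((etaF (T - τ))ᵀ * B)) *ᵥ g τ
          - H τ *ᵥ (m + (1/γ - 1) • (Bᵀ *ᵥ μF))
          + ((1 - γ)/γ^2) • (((etaF (T - τ))ᵀ * SF⁻¹) *ᵥ μF))
    -- the function `f`
    (f : ℝ → ℝ)
    (hf : ∀ τ, f τ =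
      (1 - γ)/γ * (r + (μF ⬝ᵥ (SF⁻¹ *ᵥ μF))/(2*γ)) * τ
      + ∫ u in (0:ℝ)..τ,
          ((1/2) * (g u ⬝ᵥ (((1 - γ) • A + γ • (Cᵀ * Sig * C)) *ᵥ g u))
            + (m + (1/γ - 1) • (Bᵀ *ᵥ μF)) ⬝ᵥ g u
            - (1/2) * Matrix.trace (Cᵀ * Sig * C * H u)))
    -- the candidate value function
    (v : ℝ → ℝ → (Fin N → ℝ) → ℝ)
    (hv : ∀ t x z, v t x z =
      x ^ (1 - γ) / (1 - γ) *
        Real.exp (γ * (f (T - t) + z ⬝ᵥ g (T - t) - (1/2) * (z ⬝ᵥ (H (T - t) *ᵥ z)))))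
    -- its partial derivatives
    (vt vx vxx : ℝ → ℝ → (Fin N → ℝ) → ℝ)
    (vz vxz : ℝ → ℝ → (Fin N → ℝ) → (Fin N → ℝ))
    (vzz : ℝ → ℝ → (Fin N → ℝ) → Matrix (Fin N) (Fin N) ℝ)
    (hvt : ∀ t ∈ Icc 0 T, ∀ x ∈ Ioi (0:ℝ), ∀ z,
      HasDerivWithinAt (fun s => v s x z) (vt t x z) (Icc 0 T) t)
    (hvx : ∀ t ∈ Icc 0 T, ∀ x ∈ Ioi (0:ℝ), ∀ z,
      HasDerivAt (fun y => v t y z) (vx t x z) x)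
    (hvxx : ∀ t ∈ Icc 0 T, ∀ x ∈ Ioi (0:ℝ), ∀ z,
      HasDerivAt (fun y => vx t y z) (vxx t x z) x)
    (hvz : ∀ t ∈ Icc 0 T, ∀ x ∈ Ioi (0:ℝ), ∀ z, ∀ i,
      HasDerivAt (fun s => v t x (Function.update z i s)) (vz t x z i) (z i))
    (hvzz : ∀ t ∈ Icc 0 T, ∀ x ∈ Ioi (0:ℝ), ∀ z, ∀ i j,
      HasDerivAt (fun s => vz t x (Function.update z j s) i) (vzz t x z i j) (z j))
    (hvxz : ∀ t ∈ Icc 0 T, ∀ x ∈ Ioi (0:ℝ), ∀ z, ∀ i,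
      HasDerivAt (fun s => vx t x (Function.update z i s)) (vxz t x z i) (z i)) :
    -- terminal condition
    (∀ x : ℝ, 0 < x → ∀ z, v T x z = x ^ (1 - γ) / (1 - γ)) ∧
    -- the reduced HJB equation
    (∀ t ∈ Icc 0 T, ∀ x ∈ Ioi (0:ℝ), ∀ z,
      vt t x z
        + (m + ((Cᵀ * eta t) *ᵥ z)) ⬝ᵥ vz t x z
        + (1/2) * Matrix.trace (Cᵀ * Sig * C * vzz t x z)
        + r * x * vx t x z
        - (1/2) * ((μF + (etaF t *ᵥ z)) ⬝ᵥ (SF⁻¹ *ᵥ (μF + (etaF t *ᵥ z))))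
            * (vx t x z)^2 / vxx t x z
        - (1/(2 * vxx t x z)) * (vxz t x z ⬝ᵥ (A *ᵥ vxz t x z))
        - (vx t x z / vxx t x z) * ((μF + (etaF t *ᵥ z)) ⬝ᵥ (B *ᵥ vxz t x z))
        = 0) :=
  hjb_verification_futures_only_general N SF SFS SS Sig hSigdef hSig T hT γ r hγ m μF C etaF eta A B
    hA L hL H H' hHderiv hHsymm hH0 hHric g g' hgderiv hg0 hgode f hf v hv vt vx vxx vz vxz vzz hvt
    hvx hvxx hvz hvzz hvxz
end
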